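/- arXiv:1903.07019 — 6 statements merged into one kernel-verified Lean document; each statement's English description precedes it below -/
import Mathlib

section
/- Let n ≥ 2 be an integer and let k = ⌊log₂ n⌋. Let ν_0, …, ν_k and μ_0, …, μ_k be nonnegative real numbers such that Σ_{i=0}^{k} ν_i = n and μ_i ≥ ν_i · √(2^i / n) for every i ∈ {0, …, k}. Then max_{0 ≤ i ≤ k} μ_i ≥ √n / 4. -/
lemma geom_le_four (m : ℕ) :
    ∑ i ∈ Finset.range m, ((Real.sqrt 2)⁻¹) ^ i ≤ 4 := by
  have hsq : Real.sqrt 2 ^ 2 = 2 := Real.sq_sqrt (by norm_num)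
  have h2 : (0:ℝ) < Real.sqrt 2 := Real.sqrt_pos.mpr (by norm_num)
  have hr0 : (0:ℝ) ≤ (Real.sqrt 2)⁻¹ := by positivity
  have h43 : (4/3 : ℝ) ≤ Real.sqrt 2 := by nlinarith
  have hr3 : (Real.sqrt 2)⁻¹ ≤ 3/4 := by
    rw [inv_le_iff_one_le_mul₀ h2]; nlinarith
  have hr1 : (Real.sqrt 2)⁻¹ < 1 := lt_of_le_of_lt hr3 (by norm_num)
  have hs : ∑ i ∈ Finset.range m, ((Real.sqrt 2)⁻¹) ^ i ≤ (1 - (Real.sqrt 2)⁻¹)⁻¹ :=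
    (Summable.sum_le_tsum _ (fun i _ => by positivity)
      (summable_geometric_of_lt_one hr0 hr1)).trans_eq
      (tsum_geometric_of_lt_one hr0 hr1)
  refine hs.trans ?_
  rw [inv_le_iff_one_le_mul₀ (by linarith)]
  nlinarith

/-- The key counting inequality: if `ν_0 + ⋯ + ν_k = n` with
`k = ⌊log₂ n⌋`, and `μ_i ≥ ν_i · √(2^i / n)` for every `i ≤ k`, then
`max_{0 ≤ i ≤ k} μ_i ≥ √n / 4`. -/
theorem counting_inequality (n : ℕ) (hn : 2 ≤ n) (k : ℕ) (hk : k = Nat.log 2 n)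
    (ν μ : ℕ → ℝ)
    (hν : ∀ i, i ≤ k → 0 ≤ ν i) (hμ : ∀ i, i ≤ k → 0 ≤ μ i)
    (hsum : ∑ i ∈ Finset.range (k + 1), ν i = (n : ℝ))
    (hb : ∀ i, i ≤ k → ν i * Real.sqrt ((2 : ℝ) ^ i / (n : ℝ)) ≤ μ i) :
    Real.sqrt (n : ℝ) / 4 ≤
      (Finset.range (k + 1)).sup' ⟨0, Finset.mem_range.mpr (Nat.succ_pos k)⟩ μ := by
  set M := (Finset.range (k + 1)).sup' ⟨0, Finset.mem_range.mpr (Nat.succ_pos k)⟩ μ with hM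
  have hnpos : (0:ℝ) < (n:ℝ) := by positivity
  have hsn : (0:ℝ) < Real.sqrt n := Real.sqrt_pos.mpr hnpos
  have h2 : (0:ℝ) < Real.sqrt 2 := Real.sqrt_pos.mpr (by norm_num)
  have hM0 : 0 ≤ M := le_trans (hμ 0 (Nat.zero_le k))
    (Finset.le_sup' μ (Finset.mem_range.mpr (Nat.succ_pos k)))
  have key : ∀ i ∈ Finset.range (k+1),
      ν i ≤ M * Real.sqrt n * ((Real.sqrt 2)⁻¹) ^ i := by
    intro i hi
    rw [Finset.mem_range, Nat.lt_succ_iff] at hi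
    have h1 : ν i * Real.sqrt ((2 : ℝ) ^ i / (n : ℝ)) ≤ M :=
      (hb i hi).trans (Finset.le_sup' μ (Finset.mem_range.mpr (Nat.lt_succ_of_le hi)))
    have hsqrt : Real.sqrt ((2 : ℝ) ^ i / (n : ℝ)) = (Real.sqrt 2) ^ i / Real.sqrt n := by
      rw [show ((2:ℝ)^i) = (Real.sqrt 2 ^ i)^2 by
            rw [← pow_mul, mul_comm, pow_mul, Real.sq_sqrt (by norm_num : (0:ℝ) ≤ 2)],
          Real.sqrt_div (by positivity), Real.sqrt_sq (by positivity)]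
    rw [hsqrt] at h1
    have hpos : (0:ℝ) < (Real.sqrt 2) ^ i / Real.sqrt n := by positivity
    calc ν i ≤ M / ((Real.sqrt 2) ^ i / Real.sqrt n) := (le_div_iff₀ hpos).mpr h1
      _ = M * Real.sqrt n * ((Real.sqrt 2)⁻¹) ^ i := by
          rw [div_div_eq_mul_div, div_eq_mul_inv, inv_pow]
  have hsum' : (n:ℝ) ≤ M * Real.sqrt n * ∑ i ∈ Finset.range (k+1), ((Real.sqrt 2)⁻¹) ^ i := by
    calc (n:ℝ) = ∑ i ∈ Finset.range (k+1), ν i := hsum.symm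
      _ ≤ ∑ i ∈ Finset.range (k+1), M * Real.sqrt n * ((Real.sqrt 2)⁻¹) ^ i :=
          Finset.sum_le_sum key
      _ = M * Real.sqrt n * ∑ i ∈ Finset.range (k+1), ((Real.sqrt 2)⁻¹) ^ i :=
          (Finset.mul_sum _ _ _).symm
  have hfin : (n:ℝ) ≤ M * Real.sqrt n * 4 :=
    hsum'.trans (mul_le_mul_of_nonneg_left (geom_le_four (k+1)) (by positivity))
  have hnn : Real.sqrt n * Real.sqrt n = (n:ℝ) := Real.mul_self_sqrt hnpos.le
  rw [div_le_iff₀ (by norm_num : (0:ℝ) < 4)]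
  nlinarith
end

section
/- Every finite family of pairwise disjoint segments in ℝ² that is extensible to disjoint rays admits escape routes. -/
noncomputable section

/-- A point of the plane. -/
abbrev Pt : Type := ℝ × ℝ

/-- The closed segment with endpoints `a` and `b`. -/
def Seg (a b : Pt) : Set Pt := segment ℝ a b

/-- The set of endpoints of the segments of a family `S`. -/
def SegEndpoints (S : Finset (Pt × Pt)) : Set Pt :=
  ⋃ s ∈ (S : Set (Pt × Pt)), ({s.1, s.2} : Set Pt)

/-- `S` is a family of (nondegenerate) pairwise disjoint segments. -/
def DisjointFamily (S : Finset (Pt × Pt)) : Prop :=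
  (∀ s ∈ S, s.1 ≠ s.2) ∧
  (S : Set (Pt × Pt)).Pairwise (fun s t => Disjoint (Seg s.1 s.2) (Seg t.1 t.2))

/-- No three endpoints of segments of `S` are collinear. -/
def GeneralPosition (S : Finset (Pt × Pt)) : Prop :=
  ∀ p ∈ SegEndpoints S, ∀ q ∈ SegEndpoints S, ∀ r ∈ SegEndpoints S,
    p ≠ q → p ≠ r → q ≠ r → ¬ Collinear ℝ ({p, q, r} : Set Pt)

/-- A simple polygon: a cyclic sequence of `k ≥ 3` pairwise distinct vertices such that
two edges intersect iff they are consecutive, and consecutive edges meet exactly in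
their common endpoint. -/
structure SimplePolygon : Type where
  k : ℕ
  three_le : 3 ≤ k
  vtx : ZMod k → Pt
  inj : Function.Injective vtx
  edge_inter : ∀ i j : ZMod k, i ≠ j →
    ((Seg (vtx i) (vtx (i + 1)) ∩ Seg (vtx j) (vtx (j + 1))).Nonempty ↔
      (j = i + 1 ∨ i = j + 1))
  edge_consec : ∀ i : ZMod k,
    Seg (vtx i) (vtx (i + 1)) ∩ Seg (vtx (i + 1)) (vtx (i + 2)) = {vtx (i + 1)}

/-- The union of the edges of a simple polygon. -/
def SimplePolygon.edgeUnion (P : SimplePolygon) : Set Pt :=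
  ⋃ i : ZMod P.k, Seg (P.vtx i) (P.vtx (i + 1))

/-- The closed region of a simple polygon: the union of its edges together with all
bounded connected components of the complement of the union of the edges. -/
def SimplePolygon.closedRegion (P : SimplePolygon) : Set Pt :=
  P.edgeUnion ∪
    {x | x ∉ P.edgeUnion ∧ Bornology.IsBounded (connectedComponentIn (P.edgeUnion)ᶜ x)}

/-- `P` is a circumscribing polygon for `S`: its vertex set is exactly the set of
endpoints of segments of `S`, and every segment of `S` lies in the closed region of `P`. -/
def IsCircumscribing (S : Finset (Pt × Pt)) (P : SimplePolygon) : Prop :=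
  Set.range P.vtx = SegEndpoints S ∧ ∀ s ∈ S, Seg s.1 s.2 ⊆ P.closedRegion

/-- The ray from `p` in direction `v`. -/
def Ray (p v : Pt) : Set Pt := {x : Pt | ∃ t : ℝ, 0 ≤ t ∧ x = p + t • v}

/-- `S` admits escape routes: the segments can be indexed and oriented as `[a i, b i]`
so that for every `i`, the open ray extending the segment beyond `b i` is either disjoint
from all other segments, or first meets a ray with a smaller index. -/
def AdmitsEscapeRoutes (S : Finset (Pt × Pt)) : Prop :=
  ∃ (n : ℕ) (a b : Fin n → Pt),
    (∀ i, a i ≠ b i) ∧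
    Function.Injective (fun i => Seg (a i) (b i)) ∧
    Set.range (fun i => Seg (a i) (b i)) = (fun s => Seg s.1 s.2) '' (S : Set (Pt × Pt)) ∧
    ∀ i : Fin n,
      (∀ j : Fin n, j ≠ i → Disjoint (Ray (b i) (b i - a i) \ {b i}) (Seg (a j) (b j))) ∨
      (∃ (j : Fin n) (t : ℝ), j < i ∧ 0 < t ∧
        b i + t • (b i - a i) ∈ Ray (b j) (b j - a j) ∧
        ∀ j' : Fin n, j' ≠ i → ∀ t' : ℝ, 0 < t' → t' ≤ t →
          b i + t' • (b i - a i) ∉ Seg (a j') (b j'))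

/-- `S` is extensible to pairwise disjoint rays, one containing each segment. -/
def ExtensibleToRays (S : Finset (Pt × Pt)) : Prop :=
  ∃ R : Pt × Pt → Set Pt,
    (∀ s ∈ S, (∃ p v : Pt, v ≠ 0 ∧ R s = Ray p v) ∧ Seg s.1 s.2 ⊆ R s) ∧
    (S : Set (Pt × Pt)).Pairwise (fun s t => Disjoint (R s) (R t))


lemma ray_sub (p v a b : Pt) (t1 t2 : ℝ) (h1 : 0 ≤ t1)
    (ha : a = p + t1 • v) (hb : b = p + t2 • v) (hlt : t1 < t2) :
    Ray b (b - a) ⊆ Ray p v := by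
  rintro x ⟨u, hu, rfl⟩
  refine ⟨t2 + u * (t2 - t1), by nlinarith, ?_⟩
  subst ha hb
  module

/-- Every finite family of pairwise disjoint segments that is extensible
to disjoint rays admits escape routes. -/
theorem extensible_imp_escape_routes (S : Finset (Pt × Pt))
    (hdisj : DisjointFamily S) (hext : ExtensibleToRays S) :
    AdmitsEscapeRoutes S := by
  obtain ⟨R, hR, hRpair⟩ := hext
  have key : ∀ s : {x // x ∈ S}, ∃ ab : Pt × Pt,
      Seg ab.1 ab.2 = Seg (s : Pt × Pt).1 (s : Pt × Pt).2 ∧ ab.1 ≠ ab.2 ∧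
      Ray ab.2 (ab.2 - ab.1) ⊆ R (s : Pt × Pt) := by
    rintro ⟨s, hs⟩
    obtain ⟨⟨p, v, hv, hRs⟩, hsub⟩ := hR s hs
    have h1 : s.1 ∈ R s := hsub (left_mem_segment ℝ _ _)
    have h2 : s.2 ∈ R s := hsub (right_mem_segment ℝ _ _)
    rw [hRs] at h1 h2
    obtain ⟨t1, ht1, he1⟩ := h1
    obtain ⟨t2, ht2, he2⟩ := h2
    have hne := hdisj.1 s hs
    have htne : t1 ≠ t2 := by
      intro h; apply hne; rw [he1, he2, h]
    rcases htne.lt_or_gt with h | h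
    · exact ⟨(s.1, s.2), rfl, hne, hRs ▸ ray_sub p v s.1 s.2 t1 t2 ht1 he1 he2 h⟩
    · exact ⟨(s.2, s.1), segment_symm ℝ _ _, hne.symm,
        hRs ▸ ray_sub p v s.2 s.1 t2 t1 ht2 he2 he1 h⟩
  choose f hfseg hfne hfray using key
  set e : Fin S.card → {x // x ∈ S} := ⇑S.equivFin.symm with he
  refine ⟨S.card, fun i => (f (e i)).1, fun i => (f (e i)).2, fun i => hfne (e i), ?_, ?_, ?_⟩
  · intro i j hij
    simp only at hij
    rw [hfseg (e i), hfseg (e j)] at hij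
    by_contra hne
    have hee : (e i : Pt × Pt) ≠ (e j : Pt × Pt) := fun h =>
      hne (S.equivFin.symm.injective (Subtype.ext h))
    have hd := hdisj.2 (e i).2 (e j).2 hee
    have : (Seg (e i : Pt × Pt).1 (e i : Pt × Pt).2).Nonempty :=
      ⟨_, left_mem_segment ℝ _ _⟩
    dsimp only at hd
    rw [hij, disjoint_self, Set.bot_eq_empty] at hd
    rw [hij] at this
    exact this.ne_empty hd
  · ext x
    simp only [Set.mem_range, Set.mem_image, Finset.mem_coe]
    constructor
    · rintro ⟨i, rfl⟩
      exact ⟨e i, (e i).2, (hfseg (e i)).symm⟩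
    · rintro ⟨s, hs, rfl⟩
      exact ⟨S.equivFin ⟨s, hs⟩, by rw [hfseg]; simp [he]⟩
  · intro i
    left
    intro j hji
    have hee : (e j : Pt × Pt) ≠ (e i : Pt × Pt) := fun h =>
      hji (S.equivFin.symm.injective (Subtype.ext h))
    have hd := hRpair (e i).2 (e j).2 hee.symm
    refine hd.mono ?_ ?_
    · exact (Set.diff_subset).trans (hfray (e i))
    · rw [hfseg (e j)]
      exact (hR _ (e j).2).2
end
end

section
/- For every positive integer n, there exists a family S of n pairwise disjoint segments in ℝ² such that every subfamily S' ⊆ S that admits escape routes satisfies |S'| ≤ 2·⌈√n⌉ − 1. -/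
noncomputable section

/-!
The family consists of `m - 1` rows of `m + 1` collinear horizontal segments, together with one
vertical segment crossing every row to the right of all row segments: `m²` segments in all.
The ray of the vertical segment never returns to the height of a row, and a ray along a row that
meets the ray of an earlier, freely escaping segment of the same row must cross that segment
first. Hence, by induction on the index, every row segment of an escape indexing escapes freely.
A free ray along a row hits every segment of the row ahead of it, so in each row only the
rightmost segment (pointing right, and only if the vertical segment is absent) and the leftmost
one (pointing left) can escape. This leaves at most `2 (m - 1)` segments, or `(m - 1) + 1` with
the vertical one, fewer than `2 m` either way. With `m = ⌈√n⌉`, any `n` of the `m² ≥ n`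
segments will do.
-/

theorem Finset.card_le_two_of_forall_le_or_ge {α : Type*} [LinearOrder α] {s : Finset α}
    (h : ∀ x ∈ s, (∀ y ∈ s, x ≤ y) ∨ ∀ y ∈ s, y ≤ x) : s.card ≤ 2 := by
  rcases s.eq_empty_or_nonempty with rfl | hs
  · simp
  refine (Finset.card_le_card (t := {s.min' hs, s.max' hs}) fun x hx => ?_).trans
    Finset.card_le_two
  rcases h x hx with hmin | hmax
  · exact Finset.mem_insert.2 (.inl (le_antisymm (hmin _ (s.min'_mem hs)) (s.min'_le x hx)))
  · exact Finset.mem_insert_of_mem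
      (Finset.mem_singleton.2 (le_antisymm (s.le_max' x hx) (hmax _ (s.max'_mem hs))))

theorem segment_eq_segment_iff {𝕜 E : Type*} [Field 𝕜] [LinearOrder 𝕜] [IsStrictOrderedRing 𝕜]
    [AddCommGroup E] [Module 𝕜 E] {a b c d : E} :
    segment 𝕜 a b = segment 𝕜 c d ↔ a = c ∧ b = d ∨ a = d ∧ b = c := by
  refine ⟨fun h => ?_, ?_⟩
  · have ha : a ∈ segment 𝕜 c d := h ▸ left_mem_segment 𝕜 a b
    have hb : b ∈ segment 𝕜 c d := h ▸ right_mem_segment 𝕜 a b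
    rcases eq_or_ne c d with rfl | hcd
    · rw [segment_same, Set.mem_singleton_iff] at ha hb
      exact .inl ⟨ha, hb⟩
    have hc : c ∈ segment 𝕜 a b := h ▸ left_mem_segment 𝕜 c d
    have hd : d ∈ segment 𝕜 a b := h ▸ right_mem_segment 𝕜 c d
    rw [segment_eq_image'] at ha hb hc hd
    obtain ⟨α, ⟨hα₀, hα₁⟩, rfl⟩ := ha
    obtain ⟨β, ⟨hβ₀, hβ₁⟩, rfl⟩ := hb
    obtain ⟨γ, ⟨hγ₀, hγ₁⟩, hγ⟩ := hc
    obtain ⟨δ, ⟨hδ₀, hδ₁⟩, hδ⟩ := hd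
    -- `b - a = (β - α) • (d - c)` and `d - c = (δ - γ) • (b - a)`, all factors in `[0, 1]`
    have hdc : ((δ - γ) * (β - α)) • (d - c) = (1 : 𝕜) • (d - c) := by
      linear_combination (norm := module) hδ - hγ
    have hprod := smul_left_injective 𝕜 (sub_ne_zero.2 hcd.symm) hdc
    have hβα : (β - α) * (β - α) = 1 := by
      have : (δ - γ) ^ 2 ≤ 1 := by nlinarith
      nlinarith
    rcases mul_self_eq_one_iff.1 hβα with h1 | h1
    · left; constructor <;> [rw [show α = 0 by linarith]; rw [show β = 1 by linarith]] <;> simp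
    · right; constructor <;> [rw [show α = 1 by linarith]; rw [show β = 0 by linarith]] <;> simp
  · rintro (⟨rfl, rfl⟩ | ⟨rfl, rfl⟩)
    · rfl
    · exact segment_symm 𝕜 a b

theorem seg_eq_seg_iff {a b : Pt} {s : Pt × Pt} :
    Seg a b = Seg s.1 s.2 ↔ (a, b) = s ∨ (b, a) = s := by
  obtain ⟨c, d⟩ := s
  simp only [Seg, segment_eq_segment_iff, Prod.mk.injEq]
  exact or_congr Iff.rfl and_comm

theorem mem_seg_horizontal {x₁ x₂ h : ℝ} {z : Pt} :
    z ∈ Seg (x₁, h) (x₂, h) ↔ z.1 ∈ Set.uIcc x₁ x₂ ∧ z.2 = h := by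
  rw [Seg, ← Prod.image_mk_segment_left, segment_eq_uIcc]
  constructor
  · rintro ⟨x, hx, rfl⟩; exact ⟨hx, rfl⟩
  · rintro ⟨hx, hz⟩; exact ⟨z.1, hx, Prod.ext rfl hz.symm⟩

theorem mem_seg_vertical {x y₁ y₂ : ℝ} {z : Pt} :
    z ∈ Seg (x, y₁) (x, y₂) ↔ z.1 = x ∧ z.2 ∈ Set.uIcc y₁ y₂ := by
  rw [Seg, ← Prod.image_mk_segment_right, segment_eq_uIcc]
  constructor
  · rintro ⟨y, hy, rfl⟩; exact ⟨rfl, hy⟩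
  · rintro ⟨hz, hy⟩; exact ⟨z.2, hy, Prod.ext hz.symm rfl⟩

theorem mem_ray_sdiff_of_snd_eq {a b q : Pt} (hab : a.2 = b.2) (hq : q.2 = b.2)
    (hbeyond : 0 < (q.1 - b.1) * (b.1 - a.1)) : q ∈ Ray b (b - a) \ {b} := by
  have hd : b.1 - a.1 ≠ 0 := by rintro h; simp [h] at hbeyond
  refine ⟨⟨(q.1 - b.1) * (b.1 - a.1) / (b.1 - a.1) ^ 2, by positivity, ?_⟩, ?_⟩
  · ext
    · simp only [Prod.fst_add, Prod.smul_fst, Prod.fst_sub, smul_eq_mul]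
      field_simp
      ring
    · simp [hq, hab]
  · rintro rfl; simp at hbeyond

theorem exists_smul_eq_of_mem_ray_of_snd_eq {a b a' b' : Pt} {t : ℝ}
    (hab : a.2 = b.2) (ha'b' : a'.2 = b'.2) (hne : a ≠ b) (hne' : a' ≠ b')
    (hdisj : Disjoint (Seg a b) (Seg a' b'))
    (hfree : Disjoint (Ray b' (b' - a') \ {b'}) (Seg a b))
    (ht : 0 < t) (hmeet : b + t • (b - a) ∈ Ray b' (b' - a')) :
    ∃ t' ∈ Set.Ioc 0 t, b + t' • (b - a) = b' := by
  obtain ⟨s, hs, hp⟩ := hmeet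
  have h1 := congrArg Prod.fst hp
  have h2 := congrArg Prod.snd hp
  simp only [Prod.fst_add, Prod.snd_add, Prod.smul_fst, Prod.smul_snd, Prod.fst_sub,
    Prod.snd_sub, smul_eq_mul, hab, ha'b', sub_self, mul_zero, add_zero] at h1 h2
  have hd : b.1 - a.1 ≠ 0 := fun h => hne (Prod.ext (by linarith) hab)
  have hd' : b'.1 - a'.1 ≠ 0 := fun h => hne' (Prod.ext (by linarith) ha'b')
  have hbb' : b.1 ≠ b'.1 := fun h => Set.disjoint_left.1 hdisj (right_mem_segment ℝ a b)
    (by rw [show b = b' from Prod.ext h h2]; exact right_mem_segment ℝ a' b')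
  set d := b.1 - a.1
  set d' := b'.1 - a'.1
  have hdiff : b'.1 - b.1 = t * d - s * d' := by linarith
  -- `b` does not lie beyond `b'` on the free ray of `(a', b')`
  have hbehind : 0 < (b'.1 - b.1) * d' := by
    refine lt_of_le_of_ne (not_lt.1 fun hlt => Set.disjoint_left.1 hfree
      (mem_ray_sdiff_of_snd_eq ha'b' (by rw [← h2]) (by linarith)) (right_mem_segment ℝ a b)) ?_
    exact (mul_ne_zero (sub_ne_zero.2 hbb'.symm) hd').symm
  rw [hdiff] at hbehind
  have hsame : 0 < d * d' :=
    pos_of_mul_pos_right (a := t) (by nlinarith [mul_nonneg hs (sq_nonneg d')]) ht.le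
  have hahead : 0 < (b'.1 - b.1) * d := by
    rw [hdiff]
    nlinarith [mul_pos hsame hbehind, sq_pos_of_ne_zero hd']
  refine ⟨(b'.1 - b.1) * d / d ^ 2, ⟨by positivity, ?_⟩, ?_⟩
  · rw [div_le_iff₀ (by positivity), hdiff]
    nlinarith [mul_nonneg hs hsame.le]
  · ext
    · simp only [Prod.fst_add, Prod.smul_fst, Prod.fst_sub, smul_eq_mul]
      field_simp
      ring
    · simp [hab, h2]

section EscapeRoutes

variable {n : ℕ} (a b : Fin n → Pt)

def RayIsFree (i : Fin n) : Prop :=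
  ∀ j, j ≠ i → Disjoint (Ray (b i) (b i - a i) \ {b i}) (Seg (a j) (b j))

def Escapes (i : Fin n) : Prop :=
  RayIsFree a b i ∨
    ∃ (j : Fin n) (t : ℝ), j < i ∧ 0 < t ∧ b i + t • (b i - a i) ∈ Ray (b j) (b j - a j) ∧
      ∀ j' : Fin n, j' ≠ i → ∀ t' : ℝ, 0 < t' → t' ≤ t →
        b i + t' • (b i - a i) ∉ Seg (a j') (b j')

variable {a b}

theorem rayIsFree_of_snd_eq (hne : ∀ i, a i ≠ b i)
    (hdisj : Pairwise fun i j => Disjoint (Seg (a i) (b i)) (Seg (a j) (b j)))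
    (hesc : ∀ i, Escapes a b i)
    (havoid : ∀ i j, (a i).2 = (b i).2 → (a j).2 ≠ (b j).2 →
      ∀ p ∈ Ray (b j) (b j - a j), p.2 ≠ (b i).2)
    (i : Fin n) (hi : (a i).2 = (b i).2) : RayIsFree a b i := by
  induction i using WellFoundedLT.induction with
  | _ i ih =>
  rcases hesc i with hfree | ⟨j, t, hji, ht, hmeet, hclear⟩
  · exact hfree
  by_cases hj : (a j).2 = (b j).2
  · obtain ⟨t', ⟨ht'₀, ht't⟩, hb⟩ := exists_smul_eq_of_mem_ray_of_snd_eq hi hj (hne i) (hne j)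
      (hdisj hji.ne') (ih j hji hj i hji.ne') ht hmeet
    exact (hclear j hji.ne t' ht'₀ ht't (hb ▸ right_mem_segment ℝ _ _)).elim
  · exact (havoid i j hi hj _ hmeet (by simp [hi])).elim

end EscapeRoutes

theorem DisjointFamily.subset {S T : Finset (Pt × Pt)} (hT : DisjointFamily T) (hST : S ⊆ T) :
    DisjointFamily S :=
  ⟨fun s hs => hT.1 s (hST hs), hT.2.mono (Finset.coe_subset.2 hST)⟩

theorem DisjointFamily.seg_injOn {S : Finset (Pt × Pt)} (hS : DisjointFamily S) :
    Set.InjOn (fun s : Pt × Pt => Seg s.1 s.2) S := by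
  intro s hs t ht (hst : Seg s.1 s.2 = Seg t.1 t.2)
  by_contra hne
  have : Disjoint (Seg s.1 s.2) (Seg t.1 t.2) := hS.2 hs ht hne
  rw [hst, disjoint_self, Set.bot_eq_empty] at this
  exact (this ▸ right_mem_segment ℝ t.1 t.2 : t.2 ∈ (∅ : Set Pt))

structure EscapeIndexing (S : Finset (Pt × Pt)) where
  n : ℕ
  a : Fin n → Pt
  b : Fin n → Pt
  ne : ∀ i, a i ≠ b i
  injective : Function.Injective fun i => Seg (a i) (b i)
  range_eq : Set.range (fun i => Seg (a i) (b i)) = (fun s => Seg s.1 s.2) '' (S : Set (Pt × Pt))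
  escapes : ∀ i, Escapes a b i

theorem AdmitsEscapeRoutes.nonempty_escapeIndexing {S : Finset (Pt × Pt)}
    (h : AdmitsEscapeRoutes S) : Nonempty (EscapeIndexing S) :=
  let ⟨n, a, b, hne, hinj, hrange, hesc⟩ := h
  ⟨⟨n, a, b, hne, hinj, hrange, hesc⟩⟩

namespace EscapeIndexing

variable {S : Finset (Pt × Pt)} (E : EscapeIndexing S)

theorem exists_mem (i : Fin E.n) : ∃ s ∈ S, Seg (E.a i) (E.b i) = Seg s.1 s.2 := by
  obtain ⟨s, hs, h⟩ := E.range_eq ▸ Set.mem_range_self i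
  exact ⟨s, hs, h.symm⟩

theorem exists_index {s : Pt × Pt} (hs : s ∈ S) : ∃ i, Seg (E.a i) (E.b i) = Seg s.1 s.2 := by
  have : Seg s.1 s.2 ∈ Set.range fun i => Seg (E.a i) (E.b i) := E.range_eq ▸ ⟨s, hs, rfl⟩
  exact this

theorem pairwise_disjoint (hS : DisjointFamily S) :
    Pairwise fun i j => Disjoint (Seg (E.a i) (E.b i)) (Seg (E.a j) (E.b j)) := by
  intro i j hij
  obtain ⟨s, hs, hi⟩ := E.exists_mem i
  obtain ⟨t, ht, hj⟩ := E.exists_mem j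
  rw [hi, hj]
  exact hS.2 hs ht fun hst => hij (E.injective (by simp only [hi, hj, hst]))

theorem notMem_of_rayIsFree {i : Fin E.n} (hfree : RayIsFree E.a E.b i) {s : Pt × Pt}
    (hs : s ∈ S) (hsi : Seg s.1 s.2 ≠ Seg (E.a i) (E.b i)) {q : Pt}
    (hq : q ∈ Ray (E.b i) (E.b i - E.a i) \ {E.b i}) : q ∉ Seg s.1 s.2 := by
  obtain ⟨k, hk⟩ := E.exists_index hs
  rw [← hk]
  exact Set.disjoint_left.1 (hfree k fun h => hsi (h ▸ hk.symm)) hq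

end EscapeIndexing

namespace RowFamily

open Finset

def rowSeg (y j : ℕ) : Pt × Pt := ((-(2 * j + 2), y), (-(2 * j + 1), y))

def crossSeg (m : ℕ) : Pt × Pt := ((0, -1), (0, m))

def family (m : ℕ) : Finset (Pt × Pt) :=
  insert (crossSeg m) ((range (m - 1) ×ˢ range (m + 1)).image fun p => rowSeg p.1 p.2)

theorem mem_family {m : ℕ} {s : Pt × Pt} :
    s ∈ family m ↔ s = crossSeg m ∨ ∃ y < m - 1, ∃ j < m + 1, rowSeg y j = s := by
  simp [family, and_assoc]

theorem mem_seg_rowSeg {y j : ℕ} {z : Pt} :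
    z ∈ Seg (rowSeg y j).1 (rowSeg y j).2 ↔
      z.1 ∈ Set.Icc (-(2 * j + 2) : ℝ) (-(2 * j + 1)) ∧ z.2 = y := by
  rw [rowSeg, mem_seg_horizontal, Set.uIcc_of_le (by linarith)]

theorem mem_seg_crossSeg {m : ℕ} {z : Pt} :
    z ∈ Seg (crossSeg m).1 (crossSeg m).2 ↔ z.1 = 0 ∧ z.2 ∈ Set.Icc (-1 : ℝ) m := by
  rw [crossSeg, mem_seg_vertical, Set.uIcc_of_le (by linarith [m.cast_nonneg (α := ℝ)])]

theorem rowSeg_injective : Function.Injective fun p : ℕ × ℕ => rowSeg p.1 p.2 := by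
  rintro ⟨y, j⟩ ⟨y', j'⟩ h
  simp only [rowSeg, Prod.mk.injEq, neg_inj, add_left_inj, mul_eq_mul_left_iff,
    Nat.cast_inj] at h
  simp_all

theorem rowSeg_inj {y j y' j' : ℕ} : rowSeg y j = rowSeg y' j' ↔ y = y' ∧ j = j' :=
  (rowSeg_injective.eq_iff (a := (y, j)) (b := (y', j'))).trans Prod.ext_iff

theorem crossSeg_ne_rowSeg (m y j : ℕ) : crossSeg m ≠ rowSeg y j := by
  intro h
  have := congrArg (fun s => s.1.1) h
  simp only [rowSeg, crossSeg] at this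
  linarith [j.cast_nonneg (α := ℝ)]

theorem card_family {m : ℕ} (hm : 0 < m) : (family m).card = m * m := by
  rw [family, card_insert_of_notMem, card_image_of_injective _ rowSeg_injective, card_product,
    card_range, card_range]
  · obtain ⟨k, rfl⟩ : ∃ k, m = k + 1 := ⟨m - 1, by omega⟩
    rw [Nat.add_sub_cancel]
    ring
  · rw [Finset.mem_image]
    rintro ⟨p, -, h⟩
    exact crossSeg_ne_rowSeg m p.1 p.2 h.symm

theorem disjointFamily_family (m : ℕ) : DisjointFamily (family m) := by
  refine ⟨fun s hs => ?_, fun s hs t ht hst => Set.disjoint_left.2 fun z hzs hzt => ?_⟩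
  · rcases mem_family.1 hs with rfl | ⟨y, -, j, -, rfl⟩
    · simp only [crossSeg, ne_eq, Prod.mk.injEq, true_and]
      linarith [m.cast_nonneg (α := ℝ)]
    · simp [rowSeg]
  rcases mem_family.1 hs with rfl | ⟨y, -, j, -, rfl⟩ <;>
    rcases mem_family.1 ht with rfl | ⟨y', -, j', -, rfl⟩
  · exact hst rfl
  · linarith [(mem_seg_crossSeg.1 hzs).1, (mem_seg_rowSeg.1 hzt).1.2, j'.cast_nonneg (α := ℝ)]
  · linarith [(mem_seg_crossSeg.1 hzt).1, (mem_seg_rowSeg.1 hzs).1.2, j.cast_nonneg (α := ℝ)]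
  · obtain ⟨⟨hj₁, hj₂⟩, hy⟩ := mem_seg_rowSeg.1 hzs
    obtain ⟨⟨hj'₁, hj'₂⟩, hy'⟩ := mem_seg_rowSeg.1 hzt
    have hyy' : y = y' := by exact_mod_cast hy.symm.trans hy'
    have hjj' : j < j' + 1 := by exact_mod_cast (by linarith : (j : ℝ) < j' + 1)
    have hj'j : j' < j + 1 := by exact_mod_cast (by linarith : (j' : ℝ) < j + 1)
    exact hst (by rw [hyy', show j = j' by omega])

theorem snd_of_mem_ray_crossSeg {m : ℕ} {a b p : Pt}
    (hab : (a, b) = crossSeg m ∨ (b, a) = crossSeg m) (hp : p ∈ Ray b (b - a)) :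
    p.2 ≤ -1 ∨ (m : ℝ) ≤ p.2 := by
  obtain ⟨t, ht, rfl⟩ := hp
  have hm := m.cast_nonneg (α := ℝ)
  simp only [Prod.snd_add, Prod.smul_snd, Prod.snd_sub, smul_eq_mul]
  rcases hab with h | h <;> simp only [crossSeg, Prod.mk.injEq] at h <;> rw [h.1, h.2]
  · exact .inr (by nlinarith)
  · exact .inl (by nlinarith)

theorem snd_eq_of_rowSeg {a b : Pt} {y j : ℕ}
    (h : (a, b) = rowSeg y j ∨ (b, a) = rowSeg y j) : a.2 = y ∧ b.2 = y := by
  rcases h with h | h <;> simp only [rowSeg, Prod.mk.injEq] at h <;> simp [h.1, h.2]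

theorem snd_ne_of_crossSeg {m : ℕ} {a b : Pt}
    (h : (a, b) = crossSeg m ∨ (b, a) = crossSeg m) : a.2 ≠ b.2 := by
  have hm := m.cast_nonneg (α := ℝ)
  rcases h with h | h <;> simp only [crossSeg, Prod.mk.injEq] at h <;> simp [h.1, h.2] <;> linarith

section Escape

variable {m : ℕ} {S : Finset (Pt × Pt)}

theorem orientation_cases (hS : S ⊆ family m) (E : EscapeIndexing S) (i : Fin E.n) :
    ((E.a i, E.b i) = crossSeg m ∨ (E.b i, E.a i) = crossSeg m) ∨
      ∃ y < m - 1, ∃ j, (E.a i, E.b i) = rowSeg y j ∨ (E.b i, E.a i) = rowSeg y j := by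
  obtain ⟨s, hs, h⟩ := E.exists_mem i
  rcases mem_family.1 (hS hs) with rfl | ⟨y, hy, j, -, rfl⟩
  · exact .inl (seg_eq_seg_iff.1 h)
  · exact .inr ⟨y, hy, j, seg_eq_seg_iff.1 h⟩

theorem rayIsFree_of_rowSeg (hS : S ⊆ family m) (E : EscapeIndexing S) {i : Fin E.n} {y j : ℕ}
    (hrow : (E.a i, E.b i) = rowSeg y j ∨ (E.b i, E.a i) = rowSeg y j) : RayIsFree E.a E.b i := by
  obtain ⟨hay, hby⟩ := snd_eq_of_rowSeg hrow
  refine rayIsFree_of_snd_eq E.ne (E.pairwise_disjoint ((disjointFamily_family m).subset hS))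
    E.escapes (fun i j hi hj p hp => ?_) i (hay.trans hby.symm)
  rcases orientation_cases hS E j with hcrossj | ⟨_, -, _, hrowj⟩
  · rcases orientation_cases hS E i with hcrossi | ⟨y, hy, _, hrowi⟩
    · exact absurd hi (snd_ne_of_crossSeg hcrossi)
    · have hym : (y : ℝ) < m := by exact_mod_cast (by omega : y < m)
      rw [(snd_eq_of_rowSeg hrowi).2]
      rcases snd_of_mem_ray_crossSeg hcrossj hp with h | h <;>
        linarith [y.cast_nonneg (α := ℝ)]
  · obtain ⟨hay, hby⟩ := snd_eq_of_rowSeg hrowj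
    exact absurd (hay.trans hby.symm) hj

theorem rowSeg_extreme (hS : S ⊆ family m) (E : EscapeIndexing S) {y j : ℕ} (hy : y < m - 1)
    (hj : rowSeg y j ∈ S) :
    ((∀ k, rowSeg y k ∈ S → j ≤ k) ∧ crossSeg m ∉ S) ∨ ∀ k, rowSeg y k ∈ S → k ≤ j := by
  obtain ⟨i, hi⟩ := E.exists_index hj
  have hrow := seg_eq_seg_iff.1 hi
  have hfree := rayIsFree_of_rowSeg hS E hrow
  obtain ⟨hay, hby⟩ := snd_eq_of_rowSeg hrow
  -- every point at height `y` of another segment lies behind `E.b i`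
  have hbehind : ∀ s ∈ S, s ≠ rowSeg y j → ∀ q ∈ Seg s.1 s.2, q.2 = y →
      (q.1 - (E.b i).1) * ((E.b i).1 - (E.a i).1) ≤ 0 := by
    intro s hs hsj q hq hqy
    refine not_lt.1 fun hpos => E.notMem_of_rayIsFree hfree hs (fun h => hsj ?_)
      (mem_ray_sdiff_of_snd_eq (hay.trans hby.symm) (hqy.trans hby.symm) hpos) hq
    exact ((disjointFamily_family m).subset hS).seg_injOn hs hj (h.trans hi)
  have hj' := j.cast_nonneg (α := ℝ)
  rcases hrow with h | h <;> simp only [rowSeg, Prod.mk.injEq] at h <;> rw [h.1, h.2] at hbehind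
  · refine .inl ⟨fun k hk => not_lt.1 fun hkj => ?_, fun hc => ?_⟩
    · have hkj' : (k : ℝ) + 1 ≤ j := by exact_mod_cast hkj
      have := hbehind _ hk (by rw [Ne, rowSeg_inj]; omega) _ (left_mem_segment ℝ _ _) rfl
      simp only [rowSeg] at this
      linarith
    · have hym : (y : ℝ) ≤ m := by exact_mod_cast (by omega : y ≤ m)
      have := hbehind _ hc (crossSeg_ne_rowSeg m y j) (0, y)
        (mem_seg_crossSeg.2 ⟨rfl, by linarith [y.cast_nonneg (α := ℝ)], hym⟩) rfl
      linarith
  · refine .inr fun k hk => not_lt.1 fun hjk => ?_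
    have hjk' : (j : ℝ) + 1 ≤ k := by exact_mod_cast hjk
    have := hbehind _ hk (by rw [Ne, rowSeg_inj]; omega) _ (right_mem_segment ℝ _ _) rfl
    simp only [rowSeg] at this
    linarith

def rowIndices (S : Finset (Pt × Pt)) (m y : ℕ) : Finset ℕ :=
  (range (m + 1)).filter fun j => rowSeg y j ∈ S

theorem card_rowIndices_le_two (hS : S ⊆ family m) (E : EscapeIndexing S) {y : ℕ}
    (hy : y < m - 1) : (rowIndices S m y).card ≤ 2 :=
  card_le_two_of_forall_le_or_ge fun j hj => by
    simp only [rowIndices, mem_filter] at hj ⊢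
    rcases rowSeg_extreme hS E hy hj.2 with h | h
    · exact .inl fun k hk => h.1 k hk.2
    · exact .inr fun k hk => h k hk.2

theorem card_rowIndices_le_one (hS : S ⊆ family m) (E : EscapeIndexing S) {y : ℕ}
    (hy : y < m - 1) (hc : crossSeg m ∈ S) : (rowIndices S m y).card ≤ 1 := by
  have hmax : ∀ j ∈ rowIndices S m y, ∀ k ∈ rowIndices S m y, k ≤ j := fun j hj k hk => by
    simp only [rowIndices, mem_filter] at hj hk
    rcases rowSeg_extreme hS E hy hj.2 with h | h
    · exact absurd hc h.2
    · exact h k hk.2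
  exact card_le_one.2 fun j hj k hk => le_antisymm (hmax k hk j hj) (hmax j hj k hk)

theorem card_lt_of_subset_family (hm : 0 < m) (hS : S ⊆ family m) (E : EscapeIndexing S) :
    S.card < 2 * m := by
  have hrows : S.erase (crossSeg m) ⊆
      (range (m - 1)).biUnion fun y => (rowIndices S m y).image (rowSeg y) := by
    intro s hs
    obtain ⟨hsc, hsS⟩ := mem_erase.1 hs
    rcases mem_family.1 (hS hsS) with rfl | ⟨y, hy, j, hj, rfl⟩
    · exact absurd rfl hsc
    · exact mem_biUnion.2 ⟨y, mem_range.2 hy,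
        mem_image_of_mem _ (mem_filter.2 ⟨mem_range.2 hj, hsS⟩)⟩
  have hcount : (S.erase (crossSeg m)).card ≤ ∑ y ∈ range (m - 1), (rowIndices S m y).card :=
    (Finset.card_le_card hrows).trans (card_biUnion_le.trans (sum_le_sum fun _ _ => card_image_le))
  by_cases hc : crossSeg m ∈ S
  · have := sum_le_sum fun y hy => card_rowIndices_le_one hS E (mem_range.1 hy) hc
    rw [← card_erase_add_one hc]
    simp only [sum_const, card_range, smul_eq_mul, mul_one] at this
    omega
  · have := sum_le_sum fun y hy => card_rowIndices_le_two hS E (mem_range.1 hy)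
    rw [erase_eq_of_notMem hc] at hcount
    simp only [sum_const, card_range, smul_eq_mul] at this
    omega

end Escape

end RowFamily

/-- For every `n ≥ 1` there is a family of `n` pairwise disjoint segments
such that every subfamily admitting escape routes has at most `2⌈√n⌉ − 1` segments. -/
theorem escape_routes_upper_bound (n : ℕ) (hn : 1 ≤ n) :
    ∃ S : Finset (Pt × Pt), S.card = n ∧ DisjointFamily S ∧
      ∀ S' ⊆ S, AdmitsEscapeRoutes S' →
        (S'.card : ℤ) ≤ 2 * ⌈Real.sqrt (n : ℝ)⌉ - 1 := by
  set m := ⌈Real.sqrt n⌉₊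
  have hm : 0 < m := Nat.ceil_pos.2 (Real.sqrt_pos.2 (by exact_mod_cast hn))
  have hnm : n ≤ (RowFamily.family m).card := by
    rw [RowFamily.card_family hm, ← sq]
    exact_mod_cast (Real.sqrt_le_left (by positivity)).1 (Nat.le_ceil (Real.sqrt n))
  obtain ⟨S, hSm, hSn⟩ := Finset.exists_subset_card_eq hnm
  refine ⟨S, hSn, (RowFamily.disjointFamily_family m).subset hSm, fun S' hS' hE => ?_⟩
  obtain ⟨E⟩ := hE.nonempty_escapeIndexing
  have hcard := RowFamily.card_lt_of_subset_family hm (hS'.trans hSm) E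
  have hceil : (m : ℤ) = ⌈Real.sqrt n⌉ := Int.natCast_ceil_eq_ceil (Real.sqrt_nonneg _)
  omega
end
end

section
/- Let C be a circle in ℝ² and let S be a family of k ≥ 3 pairwise disjoint parallel chords of C (segments with both endpoints on C, all having the same direction). Then no subfamily S' ⊆ S with |S'| ≥ 3 admits a polygonization. -/
noncomputable section

/-- `P` is a polygonization of `S`: its vertex set is exactly the set of endpoints of
segments of `S`, and every segment of `S` is an edge of `P`. -/
def IsPolygonization (S : Finset (Pt × Pt)) (P : SimplePolygon) : Prop :=
  Set.range P.vtx = SegEndpoints S ∧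
  ∀ s ∈ S, ∃ i : ZMod P.k,
    (P.vtx i = s.1 ∧ P.vtx (i + 1) = s.2) ∨ (P.vtx i = s.2 ∧ P.vtx (i + 1) = s.1)

namespace PC


def gl (v p : Pt) : ℝ := v.1 * p.2 - v.2 * p.1

lemma vsq_pos (v : Pt) (hv : v ≠ 0) : 0 < v.1 ^ 2 + v.2 ^ 2 := by
  rcases eq_or_lt_of_le (by positivity : (0:ℝ) ≤ v.1 ^ 2 + v.2 ^ 2) with h | h
  · exfalso; apply hv; have h1 : v.1 = 0 := by nlinarith [sq_nonneg v.1, sq_nonneg v.2]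
    have h2 : v.2 = 0 := by nlinarith [sq_nonneg v.1, sq_nonneg v.2]
    exact Prod.ext_iff.mpr ⟨h1, h2⟩
  · exact h

lemma pd (v : Pt) (hv : v ≠ 0) (a p : Pt) (h : gl v p = gl v a) :
    ∃ t : ℝ, p.1 = a.1 + t * v.1 ∧ p.2 = a.2 + t * v.2 := by
  have hv' : v.1 ≠ 0 ∨ v.2 ≠ 0 := by
    by_contra hc; push_neg at hc; exact hv (Prod.ext_iff.mpr ⟨hc.1, hc.2⟩)
  unfold gl at h
  rcases hv' with h1 | h2
  · refine ⟨(p.1 - a.1) / v.1, by field_simp; ring, ?_⟩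
    field_simp; nlinarith [h]
  · refine ⟨(p.2 - a.2) / v.2, ?_, by field_simp; ring⟩
    field_simp; nlinarith [h]

/-- chord parametrization -/
lemma chord_coef (o : Pt) (ρ : ℝ) (v a b : Pt) (hv : v ≠ 0)
    (ha : (a.1 - o.1) ^ 2 + (a.2 - o.2) ^ 2 = ρ ^ 2)
    (hb : (b.1 - o.1) ^ 2 + (b.2 - o.2) ^ 2 = ρ ^ 2)
    (hg : gl v b = gl v a) (hab : b ≠ a) :
    ∃ t' : ℝ, t' ≠ 0 ∧ b.1 = a.1 + t' * v.1 ∧ b.2 = a.2 + t' * v.2 ∧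
      t' * (v.1 ^ 2 + v.2 ^ 2) = -2 * (v.1 * (a.1 - o.1) + v.2 * (a.2 - o.2)) := by
  obtain ⟨t', h1, h2⟩ := pd v hv a b hg
  have ht' : t' ≠ 0 := by
    rintro rfl; exact hab (Prod.ext_iff.mpr ⟨by linarith [h1], by linarith [h2]⟩)
  refine ⟨t', ht', h1, h2, ?_⟩
  rw [h1, h2] at hb
  have key : t' * (t' * (v.1 ^ 2 + v.2 ^ 2) + 2 * (v.1 * (a.1 - o.1) + v.2 * (a.2 - o.2))) = 0 := by
    linear_combination hb - ha
  rcases mul_eq_zero.mp key with h | h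
  · exact absurd h ht'
  · linarith

/-- a line meets a circle in at most two points -/
lemma line_circle (o : Pt) (ρ : ℝ) (v a b p : Pt) (hv : v ≠ 0)
    (ha : (a.1 - o.1) ^ 2 + (a.2 - o.2) ^ 2 = ρ ^ 2)
    (hb : (b.1 - o.1) ^ 2 + (b.2 - o.2) ^ 2 = ρ ^ 2)
    (hp : (p.1 - o.1) ^ 2 + (p.2 - o.2) ^ 2 = ρ ^ 2)
    (hg : gl v b = gl v a) (hgp : gl v p = gl v a) (hab : b ≠ a) :
    p = a ∨ p = b := by
  obtain ⟨t', ht', hb1, hb2, hco⟩ := chord_coef o ρ v a b hv ha hb hg hab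
  obtain ⟨t, h1, h2⟩ := pd v hv a p hgp
  have hV := vsq_pos v hv
  rw [h1, h2] at hp
  have key : t * (t * (v.1 ^ 2 + v.2 ^ 2) + 2 * (v.1 * (a.1 - o.1) + v.2 * (a.2 - o.2))) = 0 := by
    linear_combination hp - ha
  rcases mul_eq_zero.mp key with h | h
  · left; subst h; exact Prod.ext_iff.mpr ⟨by linarith [h1], by linarith [h2]⟩
  · right
    have htt : t = t' := by
      have h3 : t * (v.1 ^ 2 + v.2 ^ 2) = t' * (v.1 ^ 2 + v.2 ^ 2) := by linarith
      exact mul_right_cancel₀ (ne_of_gt hV) h3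
    subst htt
    exact Prod.ext_iff.mpr ⟨by linarith [h1, hb1], by linarith [h2, hb2]⟩

/-- points of the disk on the chord line lie on the chord -/
lemma mem_chord (o : Pt) (ρ : ℝ) (v a b p : Pt) (hv : v ≠ 0)
    (ha : (a.1 - o.1) ^ 2 + (a.2 - o.2) ^ 2 = ρ ^ 2)
    (hb : (b.1 - o.1) ^ 2 + (b.2 - o.2) ^ 2 = ρ ^ 2)
    (hp : (p.1 - o.1) ^ 2 + (p.2 - o.2) ^ 2 ≤ ρ ^ 2)
    (hg : gl v b = gl v a) (hgp : gl v p = gl v a) (hab : b ≠ a) :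
    p ∈ segment ℝ a b := by
  obtain ⟨t', ht', hb1, hb2, hco⟩ := chord_coef o ρ v a b hv ha hb hg hab
  obtain ⟨t, h1, h2⟩ := pd v hv a p hgp
  have hV := vsq_pos v hv
  rw [h1, h2] at hp
  have e0 : (a.1 + t * v.1 - o.1) ^ 2 + (a.2 + t * v.2 - o.2) ^ 2 =
      ((a.1 - o.1) ^ 2 + (a.2 - o.2) ^ 2) +
        t * (t * (v.1 ^ 2 + v.2 ^ 2) + 2 * (v.1 * (a.1 - o.1) + v.2 * (a.2 - o.2))) := by ring
  have key : t * (t * (v.1 ^ 2 + v.2 ^ 2) + 2 * (v.1 * (a.1 - o.1) + v.2 * (a.2 - o.2))) ≤ 0 := by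
    rw [e0] at hp; linarith
  have heq : t * (t - t') * (v.1 ^ 2 + v.2 ^ 2) =
      t * (t * (v.1 ^ 2 + v.2 ^ 2) + 2 * (v.1 * (a.1 - o.1) + v.2 * (a.2 - o.2))) := by
    linear_combination (-t) * hco
  have h4 : t * (t - t') * (v.1 ^ 2 + v.2 ^ 2) ≤ 0 := by rw [heq]; exact key
  have h3 : t * (t - t') ≤ 0 := by
    by_contra hcon
    push_neg at hcon
    linarith [mul_pos hcon hV]
  have ht2 : (0:ℝ) < t' ^ 2 := by positivity
  have hnum0 : 0 ≤ t * t' := by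
    have e : t * (t - t') = t ^ 2 - t * t' := by ring
    nlinarith [sq_nonneg t]
  have hnum1 : 0 ≤ (t' - t) * t' := by
    have e : (t' - t) * t' = (t' - t) ^ 2 - t * (t - t') := by ring
    nlinarith [sq_nonneg (t' - t)]
  have h0 : 0 ≤ t / t' := by
    have e : t / t' = (t * t') / t' ^ 2 := by field_simp
    rw [e]; exact div_nonneg hnum0 ht2.le
  have hle1 : t / t' ≤ 1 := by
    have e : 1 - t / t' = ((t' - t) * t') / t' ^ 2 := by field_simp
    have : 0 ≤ 1 - t / t' := by rw [e]; exact div_nonneg hnum1 ht2.le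
    linarith
  rw [segment_eq_image']
  refine ⟨t / t', ⟨h0, hle1⟩, ?_⟩
  have hcoord1 : (a + (t / t') • (b - a)).1 = a.1 + (t / t') * (b.1 - a.1) := by
    simp [Prod.fst_add, Prod.smul_fst, smul_eq_mul]
  have hcoord2 : (a + (t / t') • (b - a)).2 = a.2 + (t / t') * (b.2 - a.2) := by
    simp [Prod.snd_add, Prod.smul_snd, smul_eq_mul]
  apply Prod.ext_iff.mpr
  constructor
  · rw [hcoord1, h1, hb1]; field_simp; ring
  · rw [hcoord2, h2, hb2]; field_simp; ring

/-- a segment whose endpoints are on the circle and strictly on either side of the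
chord line meets the chord -/
lemma crossing (o : Pt) (ρ : ℝ) (v a b x y : Pt) (hv : v ≠ 0)
    (ha : (a.1 - o.1) ^ 2 + (a.2 - o.2) ^ 2 = ρ ^ 2)
    (hb : (b.1 - o.1) ^ 2 + (b.2 - o.2) ^ 2 = ρ ^ 2)
    (hx : (x.1 - o.1) ^ 2 + (x.2 - o.2) ^ 2 = ρ ^ 2)
    (hy : (y.1 - o.1) ^ 2 + (y.2 - o.2) ^ 2 = ρ ^ 2)
    (hg : gl v b = gl v a) (hab : b ≠ a)
    (hgx : gl v x < gl v a) (hgy : gl v a < gl v y) :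
    (segment ℝ x y ∩ segment ℝ a b).Nonempty := by
  set θ : ℝ := (gl v a - gl v x) / (gl v y - gl v x) with hθ
  have hd : 0 < gl v y - gl v x := by linarith
  have hθ0 : 0 ≤ θ := div_nonneg (by linarith) hd.le
  have hθ1 : θ ≤ 1 := by rw [hθ, div_le_one hd]; linarith
  set p : Pt := x + θ • (y - x) with hpdef
  have hp1 : p.1 = x.1 + θ * (y.1 - x.1) := by
    simp [hpdef, Prod.fst_add, Prod.smul_fst, smul_eq_mul]
  have hp2 : p.2 = x.2 + θ * (y.2 - x.2) := by
    simp [hpdef, Prod.snd_add, Prod.smul_snd, smul_eq_mul]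
  have hpx : p ∈ segment ℝ x y := by
    rw [segment_eq_image']; exact ⟨θ, ⟨hθ0, hθ1⟩, rfl⟩
  have hgp : gl v p = gl v a := by
    have lin : gl v p = gl v x + θ * (gl v y - gl v x) := by
      unfold gl; rw [hp1, hp2]; ring
    rw [lin, hθ, div_mul_cancel₀ _ (ne_of_gt hd)]; ring
  have hpd : (p.1 - o.1) ^ 2 + (p.2 - o.2) ^ 2 ≤ ρ ^ 2 := by
    rw [hp1, hp2]
    nlinarith [hx, hy, mul_nonneg (mul_nonneg hθ0 (by linarith : (0:ℝ) ≤ 1 - θ))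
      (add_nonneg (sq_nonneg (x.1 - y.1)) (sq_nonneg (x.2 - y.2)))]
  exact ⟨p, hpx, mem_chord o ρ v a b p hv ha hb hpd hg hgp hab⟩

lemma signchange (F : ℕ → ℝ) : ∀ q p, p ≤ q → F p < 0 → 0 ≤ F q →
    ∃ m, p ≤ m ∧ m < q ∧ F m < 0 ∧ 0 ≤ F (m + 1) := by
  intro q
  induction q with
  | zero =>
    intro p hp h1 h2
    have : p = 0 := Nat.le_zero.mp hp
    subst this; linarith
  | succ q ih =>
    intro p hp h1 h2
    have hpq : p ≤ q := by
      rcases Nat.lt_succ_iff_lt_or_eq.mp (Nat.lt_succ_of_le hp) with h | h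
      · omega
      · subst h; linarith
    by_cases hq : F q < 0
    · exact ⟨q, hpq, Nat.lt_succ_self q, hq, h2⟩
    · obtain ⟨m, h3, h4, h5, h6⟩ := ih p hpq h1 (not_lt.mp hq)
      exact ⟨m, h3, Nat.lt_succ_of_lt h4, h5, h6⟩

end PC



/-- Given `k ≥ 3` pairwise disjoint parallel chords of a circle,
no subfamily of at least 3 of them admits a polygonization. -/
theorem parallel_chords_no_polygonization (o : Pt) (ρ : ℝ) (hρ : 0 < ρ)
    (S : Finset (Pt × Pt)) (hcard : 3 ≤ S.card) (hdisj : DisjointFamily S)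
    (hchord : ∀ s ∈ S,
      (s.1.1 - o.1) ^ 2 + (s.1.2 - o.2) ^ 2 = ρ ^ 2 ∧
      (s.2.1 - o.1) ^ 2 + (s.2.2 - o.2) ^ 2 = ρ ^ 2)
    (hpar : ∃ v : Pt, v ≠ 0 ∧ ∀ s ∈ S, ∃ c : ℝ, s.2 - s.1 = c • v) :
    ∀ S' ⊆ S, 3 ≤ S'.card → ¬ ∃ P : SimplePolygon, IsPolygonization S' P := by
  classical
  obtain ⟨v, hv, hparv⟩ := hpar
  intro S' hS'S hS'card
  rintro ⟨P, hPv, hPe⟩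
  haveI : NeZero P.k := ⟨by have := P.three_le; omega⟩
  have hK3 : 3 ≤ P.k := P.three_le
  have hcirc : ∀ s ∈ S', ((s.1.1 - o.1) ^ 2 + (s.1.2 - o.2) ^ 2 = ρ ^ 2 ∧
      (s.2.1 - o.1) ^ 2 + (s.2.2 - o.2) ^ 2 = ρ ^ 2) := fun s hs => hchord s (hS'S hs)
  have hne0 : ∀ s ∈ S', s.1 ≠ s.2 := fun s hs => hdisj.1 s (hS'S hs)
  have hgleq : ∀ s ∈ S', PC.gl v s.2 = PC.gl v s.1 := by
    intro s hs
    obtain ⟨c, hc⟩ := hparv s (hS'S hs)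
    have h1 : s.2.1 - s.1.1 = c * v.1 := by
      have := congrArg Prod.fst hc; simpa using this
    have h2 : s.2.2 - s.1.2 = c * v.2 := by
      have := congrArg Prod.snd hc; simpa using this
    unfold PC.gl; linear_combination v.1 * h2 - v.2 * h1
  have hdist : ∀ s ∈ S', ∀ t ∈ S', PC.gl v s.1 = PC.gl v t.1 → s = t := by
    intro s hs t ht heq
    by_contra hst
    have hline := PC.line_circle o ρ v s.1 s.2 t.1 hv (hcirc s hs).1 (hcirc s hs).2
      (hcirc t ht).1 (hgleq s hs) heq.symm (Ne.symm (hne0 s hs))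
    have hmem : t.1 ∈ Seg s.1 s.2 := by
      simp only [Seg]
      rcases hline with h | h
      · rw [h]; exact left_mem_segment ℝ s.1 s.2
      · rw [h]; exact right_mem_segment ℝ s.1 s.2
    have hd := hdisj.2 (Finset.mem_coe.mpr (hS'S hs)) (Finset.mem_coe.mpr (hS'S ht)) hst
    exact Set.disjoint_left.mp hd hmem (left_mem_segment ℝ t.1 t.2)
  -- the heights of the chords of S' are pairwise distinct; pick a "middle" chord s
  have hinj : Set.InjOn (fun s : Pt × Pt => PC.gl v s.1) ↑S' := by
    intro s hs t ht h
    exact hdist s (Finset.mem_coe.mp hs) t (Finset.mem_coe.mp ht) h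
  have hTcard : 3 ≤ (S'.image (fun s : Pt × Pt => PC.gl v s.1)).card := by
    rw [Finset.card_image_of_injOn hinj]; exact hS'card
  have hTne : (S'.image (fun s : Pt × Pt => PC.gl v s.1)).Nonempty :=
    Finset.card_pos.mp (by omega)
  set T := S'.image (fun s : Pt × Pt => PC.gl v s.1) with hTdef
  have hmem' : ((T.erase (T.min' hTne)).erase (T.max' hTne)).Nonempty := by
    apply Finset.card_pos.mp
    have h1 := Finset.pred_card_le_card_erase (s := T) (a := T.min' hTne)
    have h2 := Finset.pred_card_le_card_erase (s := T.erase (T.min' hTne)) (a := T.max' hTne)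
    omega
  obtain ⟨m, hmErase⟩ := hmem'
  have hmmx' : m ≠ T.max' hTne := (Finset.mem_erase.mp hmErase).1
  have hmT' := (Finset.mem_erase.mp hmErase).2
  have hmmn' : m ≠ T.min' hTne := (Finset.mem_erase.mp hmT').1
  have hmT : m ∈ T := (Finset.mem_erase.mp hmT').2
  have hmnlt : T.min' hTne < m := lt_of_le_of_ne (Finset.min'_le T m hmT) (Ne.symm hmmn')
  have hmxgt : m < T.max' hTne := lt_of_le_of_ne (Finset.le_max' T m hmT) hmmx'
  obtain ⟨s, hsS', hτs⟩ := Finset.mem_image.mp hmT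
  obtain ⟨s1, hs1S', hτ1⟩ := Finset.mem_image.mp (T.min'_mem hTne)
  obtain ⟨s2, hs2S', hτ2⟩ := Finset.mem_image.mp (T.max'_mem hTne)
  -- (hτs hτ1 hτ2 already beta-reduced)
  -- the chord s is an edge of the polygon
  obtain ⟨i, hi⟩ := hPe s hsS'
  have hglA : PC.gl v (P.vtx i) = m := by
    rcases hi with ⟨h1, h2⟩ | ⟨h1, h2⟩
    · rw [h1]; exact hτs
    · rw [h1, hgleq s hsS']; exact hτs
  have hglB : PC.gl v (P.vtx (i + 1)) = m := by
    rcases hi with ⟨h1, h2⟩ | ⟨h1, h2⟩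
    · rw [h2, hgleq s hsS']; exact hτs
    · rw [h2]; exact hτs
  have hBAne : P.vtx (i + 1) ≠ P.vtx i := by
    rcases hi with ⟨h1, h2⟩ | ⟨h1, h2⟩ <;> rw [h1, h2]
    · exact Ne.symm (hne0 s hsS')
    · exact hne0 s hsS'
  -- every vertex is an endpoint of a chord of S', hence lies on the circle
  have hvtx : ∀ j : ZMod P.k, ∃ r ∈ S', P.vtx j = r.1 ∨ P.vtx j = r.2 := by
    intro j
    have hj : P.vtx j ∈ SegEndpoints S' := by rw [← hPv]; exact Set.mem_range_self j
    simp only [SegEndpoints, Set.mem_iUnion, Set.mem_insert_iff, Set.mem_singleton_iff,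
      Finset.mem_coe, exists_prop] at hj
    obtain ⟨r, hr, h⟩ := hj
    exact ⟨r, hr, h⟩
  have hvcirc : ∀ j : ZMod P.k,
      ((P.vtx j).1 - o.1) ^ 2 + ((P.vtx j).2 - o.2) ^ 2 = ρ ^ 2 := by
    intro j
    obtain ⟨r, hr, h | h⟩ := hvtx j
    · rw [h]; exact (hcirc r hr).1
    · rw [h]; exact (hcirc r hr).2
  -- the height function along the polygon
  set h : ZMod P.k → ℝ := fun j => PC.gl v (P.vtx j) - m with hhdef
  have hhi : h i = 0 := by simp only [hhdef, hglA, sub_self]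
  have hhi1 : h (i + 1) = 0 := by simp only [hhdef, hglB, sub_self]
  have hzero : ∀ j, h j = 0 → j = i ∨ j = i + 1 := by
    intro j hj
    have hglj : PC.gl v (P.vtx j) = PC.gl v s.1 := by
      simp only [hhdef] at hj
      rw [hτs]; linarith
    have hline := PC.line_circle o ρ v s.1 s.2 (P.vtx j) hv (hcirc s hsS').1
      (hcirc s hsS').2 (hvcirc j) (hgleq s hsS') hglj (Ne.symm (hne0 s hsS'))
    rcases hi with ⟨h1, h2⟩ | ⟨h1, h2⟩ <;> rcases hline with h3 | h3
    · exact Or.inl (P.inj (h3.trans h1.symm))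
    · exact Or.inr (P.inj (h3.trans h2.symm))
    · exact Or.inr (P.inj (h3.trans h2.symm))
    · exact Or.inl (P.inj (h3.trans h1.symm))
  -- crossing an edge of strictly opposite signs is impossible
  have hfinal : ∀ j : ZMod P.k, h j < 0 → 0 < h (j + 1) → False := by
    intro j hjneg hjpos
    have hjne_i : j ≠ i := by
      intro hEq; rw [hEq, hhi] at hjneg; exact lt_irrefl 0 hjneg
    have hlt1 : PC.gl v (P.vtx j) < PC.gl v (P.vtx i) := by
      simp only [hhdef] at hjneg; rw [hglA]; linarith
    have hlt2 : PC.gl v (P.vtx i) < PC.gl v (P.vtx (j + 1)) := by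
      simp only [hhdef] at hjpos; rw [hglA]; linarith
    have hcr := PC.crossing o ρ v (P.vtx i) (P.vtx (i + 1)) (P.vtx j) (P.vtx (j + 1)) hv
      (hvcirc i) (hvcirc (i + 1)) (hvcirc j) (hvcirc (j + 1))
      (hglB.trans hglA.symm) hBAne hlt1 hlt2
    have hne' := (P.edge_inter j i hjne_i).mp (by simpa only [Seg] using hcr)
    rcases hne' with hcase | hcase
    · rw [← hcase, hhi] at hjpos; exact lt_irrefl 0 hjpos
    · rw [hcase, hhi1] at hjneg; exact lt_irrefl 0 hjneg
  have hfinal' : ∀ j : ZMod P.k, 0 < h j → h (j + 1) < 0 → False := by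
    intro j hjpos hjneg
    have hjne_i : j ≠ i := by
      intro hEq; rw [hEq, hhi] at hjpos; exact lt_irrefl 0 hjpos
    have hlt1 : PC.gl v (P.vtx (j + 1)) < PC.gl v (P.vtx i) := by
      simp only [hhdef] at hjneg; rw [hglA]; linarith
    have hlt2 : PC.gl v (P.vtx i) < PC.gl v (P.vtx j) := by
      simp only [hhdef] at hjpos; rw [hglA]; linarith
    have hcr := PC.crossing o ρ v (P.vtx i) (P.vtx (i + 1)) (P.vtx (j + 1)) (P.vtx j) hv
      (hvcirc i) (hvcirc (i + 1)) (hvcirc (j + 1)) (hvcirc j)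
      (hglB.trans hglA.symm) hBAne hlt1 hlt2
    rw [segment_symm] at hcr
    have hne' := (P.edge_inter j i hjne_i).mp (by simpa only [Seg] using hcr)
    rcases hne' with hcase | hcase
    · rw [← hcase, hhi] at hjneg; exact lt_irrefl 0 hjneg
    · rw [hcase, hhi1] at hjpos; exact lt_irrefl 0 hjpos
  -- cast bookkeeping in ZMod P.k
  have hneg1 : ((P.k - 1 : ℕ) : ZMod P.k) = -1 := by
    have h1 : ((P.k - 1 : ℕ) : ZMod P.k) + 1 = ((P.k : ℕ) : ZMod P.k) := by
      rw [← Nat.cast_add_one, Nat.sub_add_cancel (by omega : 1 ≤ P.k)]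
    rw [ZMod.natCast_self] at h1
    exact eq_neg_of_add_eq_zero_left h1
  have hcast_i : ∀ n : ℕ, n < P.k → ((i + 1 + (n : ZMod P.k) = i) ↔ n = P.k - 1) := by
    intro n hn
    constructor
    · intro hEq
      have h2 : (n : ZMod P.k) = ((P.k - 1 : ℕ) : ZMod P.k) := by
        rw [hneg1]; linear_combination hEq
      have h3 := congrArg ZMod.val h2
      rwa [ZMod.val_cast_of_lt hn, ZMod.val_cast_of_lt (by omega)] at h3
    · rintro rfl; rw [hneg1]; ring
  have hcast_i1 : ∀ n : ℕ, n < P.k → ((i + 1 + (n : ZMod P.k) = i + 1) ↔ n = 0) := by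
    intro n hn
    constructor
    · intro hEq
      have h2 : (n : ZMod P.k) = 0 := by linear_combination hEq
      have h3 := congrArg ZMod.val h2
      rwa [ZMod.val_cast_of_lt hn, ZMod.val_zero] at h3
    · rintro rfl; simp
  -- locate negative and positive vertices
  have hep1 : s1.1 ∈ SegEndpoints S' := by
    simp only [SegEndpoints, Set.mem_iUnion, Set.mem_insert_iff, Set.mem_singleton_iff,
      Finset.mem_coe, exists_prop]
    exact ⟨s1, hs1S', Or.inl rfl⟩
  have hep2 : s2.1 ∈ SegEndpoints S' := by
    simp only [SegEndpoints, Set.mem_iUnion, Set.mem_insert_iff, Set.mem_singleton_iff,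
      Finset.mem_coe, exists_prop]
    exact ⟨s2, hs2S', Or.inl rfl⟩
  obtain ⟨j1, hj1⟩ : ∃ j, P.vtx j = s1.1 := by rw [← hPv] at hep1; exact hep1
  obtain ⟨j2, hj2⟩ : ∃ j, P.vtx j = s2.1 := by rw [← hPv] at hep2; exact hep2
  have hj1neg : h j1 < 0 := by
    simp only [hhdef, hj1, hτ1]; linarith
  have hj2pos : 0 < h j2 := by
    simp only [hhdef, hj2, hτ2]; linarith
  -- natural number indices along the cycle starting after the edge s
  set F : ℕ → ℝ := fun n => h (i + 1 + (n : ZMod P.k)) with hFdef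
  set n1 := (j1 - (i + 1)).val with hn1def
  set n2 := (j2 - (i + 1)).val with hn2def
  have hn1K : n1 < P.k := ZMod.val_lt _
  have hn2K : n2 < P.k := ZMod.val_lt _
  have hrep1 : i + 1 + ((n1 : ℕ) : ZMod P.k) = j1 := by
    rw [hn1def, ZMod.natCast_rightInverse (j1 - (i + 1))]; ring
  have hrep2 : i + 1 + ((n2 : ℕ) : ZMod P.k) = j2 := by
    rw [hn2def, ZMod.natCast_rightInverse (j2 - (i + 1))]; ring
  have hFn1 : F n1 < 0 := by simp only [hFdef, hrep1]; exact hj1neg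
  have hFn2 : 0 < F n2 := by simp only [hFdef, hrep2]; exact hj2pos
  have hn1neK : n1 ≠ P.k - 1 := by
    intro hK1
    have hEq : i + 1 + ((n1 : ℕ) : ZMod P.k) = i := by
      rw [hK1]; exact (hcast_i (P.k - 1) (by omega)).mpr rfl
    rw [hrep1] at hEq
    rw [hEq, hhi] at hj1neg; exact lt_irrefl 0 hj1neg
  have hn2neK : n2 ≠ P.k - 1 := by
    intro hK1
    have hEq : i + 1 + ((n2 : ℕ) : ZMod P.k) = i := by
      rw [hK1]; exact (hcast_i (P.k - 1) (by omega)).mpr rfl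
    rw [hrep2] at hEq
    rw [hEq, hhi] at hj2pos; exact lt_irrefl 0 hj2pos
  have hstep : ∀ mm : ℕ, i + 1 + ((mm : ℕ) : ZMod P.k) + 1 = i + 1 + (((mm + 1 : ℕ)) : ZMod P.k) := by
    intro mm; push_cast; ring
  rcases lt_trichotomy n1 n2 with hlt | heqn | hgt
  · obtain ⟨mm, hm1, hm2, hFm, hFm1⟩ := PC.signchange F n2 n1 hlt.le hFn1 hFn2.le
    have hmm1K : mm + 1 < P.k := by omega
    have hFm1pos : 0 < F (mm + 1) := by
      rcases eq_or_lt_of_le hFm1 with h0 | h0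
      · exfalso
        have hz := hzero _ h0.symm
        rcases hz with hc | hc
        · have := (hcast_i (mm + 1) hmm1K).mp hc; omega
        · have := (hcast_i1 (mm + 1) hmm1K).mp hc; omega
      · exact h0
    apply hfinal (i + 1 + ((mm : ℕ) : ZMod P.k))
    · exact hFm
    · rw [hstep mm]; exact hFm1pos
  · exfalso; rw [heqn] at hFn1; linarith
  · obtain ⟨mm, hm1, hm2, hFm, hFm1⟩ := PC.signchange (fun n => -F n) n1 n2 hgt.le
      (by simpa using hFn2) (by simpa using hFn1.le)
    simp only [neg_neg, Left.neg_neg_iff, Left.nonneg_neg_iff] at hFm hFm1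
    have hmm1K : mm + 1 < P.k := by omega
    have hFm1neg : F (mm + 1) < 0 := by
      rcases eq_or_lt_of_le hFm1 with h0 | h0
      · exfalso
        have hz := hzero _ h0
        rcases hz with hc | hc
        · have := (hcast_i (mm + 1) hmm1K).mp hc; omega
        · have := (hcast_i1 (mm + 1) hmm1K).mp hc; omega
      · exact h0
    apply hfinal' (i + 1 + ((mm : ℕ) : ZMod P.k))
    · exact hFm
    · rw [hstep mm]; exact hFm1neg
end
end

section
/- Let S be a finite family of at least 2 pairwise disjoint segments in ℝ² in general position, let V be the set of endpoints of segments of S, and let s ∈ S be a segment that is an edge of the convex hull of V (i.e., both endpoints of s are extreme points of conv(V) and s is contained in the boundary of conv(V)). Then s is an edge of every circumscribing polygon for S. -/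
noncomputable section

/-- A segment of `S` that is an edge of the convex hull of the endpoint
set (both endpoints extreme, segment on the hull boundary) is an edge of every
circumscribing polygon for `S`. -/
theorem hull_edge_is_polygon_edge (S : Finset (Pt × Pt)) (hcard : 2 ≤ S.card)
    (hdisj : DisjointFamily S) (hgp : GeneralPosition S)
    (s : Pt × Pt) (hs : s ∈ S)
    (hext1 : s.1 ∈ Set.extremePoints ℝ (convexHull ℝ (SegEndpoints S)))
    (hext2 : s.2 ∈ Set.extremePoints ℝ (convexHull ℝ (SegEndpoints S)))
    (hbd : Seg s.1 s.2 ⊆ frontier (convexHull ℝ (SegEndpoints S))) :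
    ∀ P : SimplePolygon, IsCircumscribing S P →
      ∃ i : ZMod P.k,
        (P.vtx i = s.1 ∧ P.vtx (i + 1) = s.2) ∨ (P.vtx i = s.2 ∧ P.vtx (i + 1) = s.1) := by
  intro P hP
  haveI : NeZero P.k := ⟨by have := P.three_le; omega⟩
  set V : Set Pt := SegEndpoints S with hV
  have hVfin : V.Finite :=
    Set.Finite.biUnion S.finite_toSet (fun t _ => (Set.finite_singleton t.2).insert t.1)
  have hCclosed : IsClosed (convexHull ℝ V) := (hVfin.isCompact_convexHull ℝ).isClosed
  have hvtxV : ∀ i, P.vtx i ∈ V := by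
    intro i
    rw [hV, ← hP.1]
    exact Set.mem_range_self i
  -- the edges lie in the convex hull of the vertex set
  have hedge_sub : P.edgeUnion ⊆ convexHull ℝ V := by
    refine Set.iUnion_subset fun i => ?_
    exact (convex_convexHull ℝ V).segment_subset (subset_convexHull ℝ V (hvtxV i))
      (subset_convexHull ℝ V (hvtxV _))
  -- the closed region lies in the convex hull of the vertex set
  have hregion : P.closedRegion ⊆ convexHull ℝ V := by
    rintro x (hx | ⟨hx1, hx2⟩)
    · exact hedge_sub hx
    · by_contra hxC
      obtain ⟨f, u, hfu, hux⟩ :=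
        geometric_hahn_banach_closed_point (convex_convexHull ℝ V) hCclosed hxC
      obtain ⟨t, ht⟩ := Finset.card_pos.mp (by omega : 0 < S.card)
      have hv0 : t.1 ∈ V := Set.mem_biUnion ht (by simp)
      have hft : f t.1 < u := hfu t.1 (subset_convexHull ℝ V hv0)
      have hfd0 : f (x - t.1) ≠ 0 := by
        rw [map_sub]; intro h; nlinarith
      set d : Pt := (f (x - t.1))⁻¹ • (x - t.1) with hd
      have hfd : f d = 1 := by
        rw [hd, map_smul, smul_eq_mul, inv_mul_cancel₀ hfd0]
      have hd0 : d ≠ 0 := by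
        intro h; rw [h, map_zero] at hfd; exact one_ne_zero hfd.symm
      set R : Set Pt := (fun r : ℝ => x + r • d) '' Set.Ici 0 with hR
      have hRsub : R ⊆ (P.edgeUnion)ᶜ := by
        rintro _ ⟨r, hr, rfl⟩ hmem
        have h1 : f (x + r • d) < u := hfu _ (hedge_sub hmem)
        have h2 : f (x + r • d) = f x + r := by
          rw [map_add, map_smul, smul_eq_mul, hfd, mul_one]
        rw [h2] at h1
        have : (0:ℝ) ≤ r := hr
        linarith
      have hRconn : IsPreconnected R :=
        isPreconnected_Ici.image _ (Continuous.continuousOn (by continuity))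
      have hxR : x ∈ R := ⟨0, Set.mem_Ici.mpr le_rfl, by simp⟩
      have hRcc : R ⊆ connectedComponentIn (P.edgeUnion)ᶜ x :=
        hRconn.subset_connectedComponentIn hxR hRsub
      obtain ⟨C, hC⟩ := isBounded_iff_forall_norm_le.1 (hx2.subset hRcc)
      have hdnorm : 0 < ‖d‖ := norm_pos_iff.mpr hd0
      have hCx : ‖x‖ ≤ C := by simpa using hC x hxR
      set r0 : ℝ := (C + ‖x‖ + 1) / ‖d‖ with hr0
      have hr0pos : 0 ≤ r0 := by
        apply div_nonneg _ hdnorm.le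
        have : (0:ℝ) ≤ ‖x‖ := norm_nonneg _
        linarith
      have hmem : x + r0 • d ∈ R := ⟨r0, Set.mem_Ici.mpr hr0pos, rfl⟩
      have h1 : ‖x + r0 • d‖ ≤ C := hC _ hmem
      have h2 : ‖r0 • d‖ ≤ ‖x + r0 • d‖ + ‖x‖ := by
        have := norm_add_le (x + r0 • d) (-x)
        simpa using this
      rw [norm_smul, Real.norm_eq_abs, abs_of_nonneg hr0pos, hr0,
        div_mul_cancel₀ _ hdnorm.ne'] at h2
      linarith
  -- edge union is closed
  have hEclosed : IsClosed P.edgeUnion := by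
    apply isClosed_iUnion_of_finite
    intro i
    rw [Seg, ← convexHull_pair]
    exact (((Set.finite_singleton _).insert _).isCompact_convexHull ℝ).isClosed
  -- the segment s is covered by the edges
  have hseg_sub : Seg s.1 s.2 ⊆ P.edgeUnion := by
    intro x hx
    by_contra hxE
    rcases hP.2 s hs hx with h | ⟨h1, h2⟩
    · exact hxE h
    · set U := connectedComponentIn (P.edgeUnion)ᶜ x with hU
      have hUopen : IsOpen U := hEclosed.isOpen_compl.connectedComponentIn
      have hxU : x ∈ U := mem_connectedComponentIn hxE
      have hUsub : U ⊆ convexHull ℝ V := by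
        intro y hy
        have hyE : y ∉ P.edgeUnion := connectedComponentIn_subset _ _ hy
        have heq : connectedComponentIn (P.edgeUnion)ᶜ y = U := (connectedComponentIn_eq hy).symm
        exact hregion (Or.inr ⟨hyE, heq ▸ h2⟩)
      have hint : x ∈ interior (convexHull ℝ V) := interior_maximal hUsub hUopen hxU
      have hfr := hbd hx
      rw [hCclosed.frontier_eq] at hfr
      exact hfr.2 hint
  have hab : s.1 ≠ s.2 := hdisj.1 s hs
  have hba : s.2 - s.1 ≠ 0 := sub_ne_zero.mpr (Ne.symm hab)
  -- the segment is infinite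
  have hinf : (Seg s.1 s.2).Infinite := by
    rw [Seg, segment_eq_image']
    apply Set.Infinite.image ?_ (Set.Icc_infinite zero_lt_one)
    intro t _ u _ h
    have h' : (t - u) • (s.2 - s.1) = 0 := by
      have : t • (s.2 - s.1) = u • (s.2 - s.1) := by
        have := h; dsimp at this
        exact add_left_cancel this
      rw [sub_smul, this, sub_self]
    rcases smul_eq_zero.1 h' with h'' | h''
    · linarith [sub_eq_zero.1 h'']
    · exact absurd h'' hba
  -- some edge meets s in infinitely many points
  have hcover : Seg s.1 s.2 = ⋃ i : ZMod P.k, (Seg s.1 s.2 ∩ Seg (P.vtx i) (P.vtx (i + 1))) := by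
    ext z
    constructor
    · intro hz
      obtain ⟨T, ⟨i, rfl⟩, hmem⟩ := hseg_sub hz
      exact Set.mem_iUnion.2 ⟨i, hz, hmem⟩
    · rintro hz
      obtain ⟨i, hi, -⟩ := Set.mem_iUnion.1 hz
      exact hi
  obtain ⟨i, hi⟩ : ∃ i : ZMod P.k, (Seg s.1 s.2 ∩ Seg (P.vtx i) (P.vtx (i + 1))).Infinite := by
    by_contra h
    push_neg at h
    exact hinf (hcover ▸ Set.finite_iUnion h)
  obtain ⟨x, hx, y, hy, hxy⟩ := hi.nontrivial
  -- extract parameters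
  set p := P.vtx i with hp
  set q := P.vtx (i + 1) with hq
  simp only [Seg, segment_eq_image', Set.mem_inter_iff, Set.mem_image] at hx hy
  obtain ⟨⟨sx, _, hxab⟩, ⟨ux, _, hxpq⟩⟩ := hx
  obtain ⟨⟨sy, _, hyab⟩, ⟨uy, _, hypq⟩⟩ := hy
  have hxab : s.1 + sx • (s.2 - s.1) = x := hxab
  have hyab : s.1 + sy • (s.2 - s.1) = y := hyab
  have hxpq : p + ux • (q - p) = x := hxpq
  have hypq : p + uy • (q - p) = y := hypq
  have hsxy : sx ≠ sy := by
    intro h; exact hxy (by rw [← hxab, ← hyab, h])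
  have huxy : ux ≠ uy := by
    intro h; exact hxy (by rw [← hxpq, ← hypq, h])
  have hkey : (sy - sx) • (s.2 - s.1) = (uy - ux) • (q - p) := by
    have h1 : y - x = (sy - sx) • (s.2 - s.1) := by
      rw [← hxab, ← hyab, sub_smul]; abel
    have h2 : y - x = (uy - ux) • (q - p) := by
      rw [← hxpq, ← hypq, sub_smul]; abel
    rw [← h1, h2]
  set e : ℝ := (uy - ux)⁻¹ * (sy - sx) with he
  have hqp : q - p = e • (s.2 - s.1) := by
    have hu : uy - ux ≠ 0 := sub_ne_zero.mpr (Ne.symm huxy)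
    calc q - p = (uy - ux)⁻¹ • ((uy - ux) • (q - p)) := by
          rw [smul_smul, inv_mul_cancel₀ hu, one_smul]
      _ = (uy - ux)⁻¹ • ((sy - sx) • (s.2 - s.1)) := by rw [hkey]
      _ = e • (s.2 - s.1) := by rw [he, smul_smul]
  have hpval : p = s.1 + (sx - ux * e) • (s.2 - s.1) := by
    have : p = x - ux • (q - p) := by rw [← hxpq]; abel
    rw [this, ← hxab, hqp, smul_smul, sub_smul]; abel
  have hqval : q = s.1 + (sx - ux * e + e) • (s.2 - s.1) := by
    have h : q = (q - p) + p := by abel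
    rw [h, hqp, hpval, add_smul]; abel
  -- collinearity of {s.1, s.2, p} and {s.1, s.2, q}
  have hcol : ∀ z : Pt, (∃ r : ℝ, z = s.1 + r • (s.2 - s.1)) →
      Collinear ℝ ({s.1, s.2, z} : Set Pt) := by
    rintro z ⟨r, hr⟩
    rw [collinear_iff_of_mem (Set.mem_insert s.1 _)]
    refine ⟨s.2 - s.1, ?_⟩
    rintro w (rfl | rfl | rfl)
    · exact ⟨0, by simp⟩
    · exact ⟨1, by simp⟩
    · exact ⟨r, by rw [hr]; simp [add_comm]⟩
  have hsV1 : s.1 ∈ V := Set.mem_biUnion hs (by simp)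
  have hsV2 : s.2 ∈ V := Set.mem_biUnion hs (by simp)
  have hmem_ab : ∀ z : Pt, z ∈ V → (∃ r : ℝ, z = s.1 + r • (s.2 - s.1)) →
      z = s.1 ∨ z = s.2 := by
    intro z hzV hzr
    by_contra h
    push_neg at h
    exact hgp s.1 hsV1 s.2 hsV2 z hzV hab (Ne.symm h.1) (Ne.symm h.2) (hcol z hzr)
  have hpV : p ∈ V := hvtxV i
  have hqV : q ∈ V := hvtxV (i + 1)
  have hpab : p = s.1 ∨ p = s.2 := hmem_ab p hpV ⟨sx - ux * e, hpval⟩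
  have hqab : q = s.1 ∨ q = s.2 := hmem_ab q hqV ⟨sx - ux * e + e, hqval⟩
  have hpq : p ≠ q := by
    intro h
    have hii : i = i + 1 := P.inj h
    haveI : Fact (1 < P.k) := ⟨by have := P.three_le; omega⟩
    have h1 : (1 : ZMod P.k) ≠ 0 := one_ne_zero
    exact h1 (by
      have h2 : i + 0 = i + 1 := by rw [add_zero]; exact hii
      exact (add_left_cancel h2).symm)
  refine ⟨i, ?_⟩
  rcases hpab with h1 | h1 <;> rcases hqab with h2 | h2
  · exact absurd (h1.trans h2.symm) hpq
  · exact Or.inl ⟨h1, h2⟩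
  · exact Or.inr ⟨h1, h2⟩
  · exact absurd (h1.trans h2.symm) hpq
end
end

section
/- Every finite set V ⊆ ℝ² with |V| ≥ 3 whose points do not all lie on a single line is the vertex set of a simple polygon (i.e., V admits a simple polygonization). -/
/-!
Choose an affine functional `f` that is injective on `V`, and let `p` and `q` be the points of `V`
where it is smallest and largest. As `V` is not collinear, the line `pq` is the zero set of an
affine functional `g` that is positive somewhere on `V`. Go from `p` to `q` through the points
with `g ≤ 0` in increasing order of `f`, then back to `p` through the points with `g > 0` in
decreasing order of `f`. Two edges of the same chain lie in disjoint slabs of `f` unless they are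
adjacent, and edges of different chains are separated by the line `g = 0`, which the upper chain
touches only at `p` and `q`; so the closed walk is a simple polygon.
-/


noncomputable section

section AffineFunctional

variable {E : Type*} [AddCommGroup E] [Module ℝ E] (h : E →ᵃ[ℝ] ℝ) {a b c d z : E}

lemma apply_mem_uIcc_of_mem_segment (hz : z ∈ segment ℝ a b) :
    h z ∈ Set.uIcc (h a) (h b) := by
  rw [← segment_eq_uIcc, ← image_segment]
  exact Set.mem_image_of_mem h hz

lemma apply_le_of_mem_segment {r : ℝ} (ha : h a ≤ r) (hb : h b ≤ r)
    (hz : z ∈ segment ℝ a b) : h z ≤ r :=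
  (apply_mem_uIcc_of_mem_segment h hz).2.trans (max_le ha hb)

lemma le_apply_of_mem_segment {r : ℝ} (ha : r ≤ h a) (hb : r ≤ h b)
    (hz : z ∈ segment ℝ a b) : r ≤ h z :=
  (le_min ha hb).trans (apply_mem_uIcc_of_mem_segment h hz).1

lemma lt_apply_of_mem_segment {r : ℝ} (ha : r < h a) (hb : r < h b)
    (hz : z ∈ segment ℝ a b) : r < h z :=
  (lt_min ha hb).trans_le (apply_mem_uIcc_of_mem_segment h hz).1

lemma injOn_segment (hab : h a ≠ h b) : Set.InjOn h (segment ℝ a b) := by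
  rw [segment_eq_image_lineMap]
  rintro _ ⟨s, -, rfl⟩ _ ⟨s', -, rfl⟩ hss'
  rw [AffineMap.apply_lineMap, AffineMap.apply_lineMap] at hss'
  rw [AffineMap.lineMap_injective ℝ hab hss']

lemma disjoint_segment_of_apply_le_of_lt {r : ℝ} (ha : h a ≤ r) (hb : h b ≤ r) (hc : r < h c)
    (hd : r < h d) : Disjoint (segment ℝ a b) (segment ℝ c d) :=
  Set.disjoint_left.2 fun _ hab hcd =>
    (apply_le_of_mem_segment h ha hb hab).not_gt (lt_apply_of_mem_segment h hc hd hcd)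

lemma eq_of_mem_segment_of_mem_segment (ha : h a ≤ h c) (hb : h b ≤ h c) (hd : h c < h d)
    (hzab : z ∈ segment ℝ a b) (hzcd : z ∈ segment ℝ c d) : z = c :=
  injOn_segment h hd.ne hzcd (left_mem_segment ℝ c d) <|
    (apply_le_of_mem_segment h ha hb hzab).antisymm (le_apply_of_mem_segment h le_rfl hd.le hzcd)

end AffineFunctional

open Finset in
theorem Finset.exists_bijOn_strictMonoOn_comp {α β : Type*} [Nonempty α] [LinearOrder β]
    (s : Finset α) {f : α → β} (hf : Set.InjOn f s) :
    ∃ w : ℕ → α, Set.BijOn w (Set.Iio #s) s ∧ StrictMonoOn (f ∘ w) (Set.Iio #s) := by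
  classical
  let e := (s.image f).orderEmbOfFin (card_image_of_injOn hf)
  have he : ∀ i, ∃ a ∈ (s : Set α), f a = e i := fun i =>
    mem_image.1 ((s.image f).orderEmbOfFin_mem _ i)
  let w : ℕ → α := fun n =>
    if hn : n < #s then Function.invFunOn f s (e ⟨n, hn⟩) else Classical.arbitrary α
  have hw : ∀ n (hn : n < #s), w n ∈ s ∧ f (w n) = e ⟨n, hn⟩ := fun n hn => by
    simp only [w, dif_pos hn]
    exact ⟨Function.invFunOn_mem (he _), Function.invFunOn_eq (he _)⟩
  have hmono : StrictMonoOn (f ∘ w) (Set.Iio #s) := fun a ha b hb hab => by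
    simp only [Function.comp, (hw a ha).2, (hw b hb).2]
    exact e.strictMono hab
  refine ⟨w, ⟨fun n hn => (hw n hn).1, hmono.injOn.of_comp, fun x hx => ?_⟩, hmono⟩
  obtain ⟨i, hi⟩ : f x ∈ Set.range e := by simpa [e] using ⟨x, hx, rfl⟩
  exact ⟨i, i.2, hf (hw i i.2).1 hx ((hw i i.2).2.trans hi)⟩

theorem Set.nontrivial_of_not_collinear {k V P : Type*} [DivisionRing k] [AddCommGroup V]
    [Module k V] [AddTorsor V P] {s : Set P} (hs : ¬ Collinear k s) : s.Nontrivial := by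
  refine s.subsingleton_or_nontrivial.resolve_left fun h => hs ?_
  rcases h.eq_empty_or_singleton with rfl | ⟨x, rfl⟩
  exacts [collinear_empty k P, collinear_singleton k x]

lemma exists_eq_smul_of_mul_eq_mul {u v : ℝ × ℝ} (hu : u ≠ 0) (h : u.1 * v.2 = u.2 * v.1) :
    ∃ r : ℝ, v = r • u := by
  by_cases hu₁ : u.1 = 0
  · have hu₂ : u.2 ≠ 0 := fun hu₂ => hu (Prod.ext hu₁ hu₂)
    refine ⟨v.2 / u.2, Prod.ext ?_ ?_⟩
    · simp only [Prod.smul_fst, smul_eq_mul, hu₁, mul_zero]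
      simpa [hu₁, hu₂] using h.symm
    · simp [hu₂]
  · refine ⟨v.1 / u.1, Prod.ext ?_ ?_⟩
    · simp [hu₁]
    · simp only [Prod.smul_snd, smul_eq_mul]
      field_simp
      linarith

lemma exists_affineMap_injOn (V : Finset Pt) : ∃ f : Pt →ᵃ[ℝ] ℝ, Set.InjOn f V := by
  classical
  obtain ⟨c, hc⟩ := Infinite.exists_notMem_finset
    ((V ×ˢ V).image fun uv : Pt × Pt => (uv.2.1 - uv.1.1) / (uv.1.2 - uv.2.2))
  refine ⟨(LinearMap.fst ℝ ℝ ℝ + c • LinearMap.snd ℝ ℝ ℝ).toAffineMap, fun u hu v hv huv => ?_⟩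
  simp only [LinearMap.coe_toAffineMap, LinearMap.add_apply, LinearMap.smul_apply,
    LinearMap.coe_fst, LinearMap.coe_snd, smul_eq_mul] at huv
  by_cases h₂ : u.2 = v.2
  · exact Prod.ext (by rw [h₂] at huv; linarith) h₂
  · refine absurd (Finset.mem_image.2 ⟨(u, v), Finset.mem_product.2 ⟨hu, hv⟩, ?_⟩) hc
    rw [div_eq_iff (sub_ne_zero.2 h₂)]
    linarith

lemma exists_affineMap_eq_zero_of_not_collinear {s : Set Pt} (hs : ¬ Collinear ℝ s) {p q : Pt}
    (hpq : p ≠ q) : ∃ g : Pt →ᵃ[ℝ] ℝ, g p = 0 ∧ g q = 0 ∧ ∃ v ∈ s, 0 < g v := by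
  let ℓ : Pt →ₗ[ℝ] ℝ := (q.1 - p.1) • LinearMap.snd ℝ ℝ ℝ - (q.2 - p.2) • LinearMap.fst ℝ ℝ ℝ
  let g : Pt →ᵃ[ℝ] ℝ := ℓ.toAffineMap - AffineMap.const ℝ Pt (ℓ p)
  have hg : ∀ z, g z = (q.1 - p.1) * (z.2 - p.2) - (q.2 - p.2) * (z.1 - p.1) := fun z => by
    simp [g, ℓ]; ring
  obtain ⟨v, hv, hgv⟩ : ∃ v ∈ s, g v ≠ 0 := by
    by_contra! h
    refine hs ((collinear_iff_exists_forall_eq_smul_vadd s).2 ⟨p, q - p, fun x hx => ?_⟩)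
    have hx := h x hx
    rw [hg] at hx
    obtain ⟨r, hr⟩ := exists_eq_smul_of_mul_eq_mul (u := q - p) (v := x - p)
      (sub_ne_zero.2 hpq.symm) (by simp only [Prod.fst_sub, Prod.snd_sub]; linarith)
    exact ⟨r, by rw [← hr, vadd_eq_add, sub_add_cancel]⟩
  have hgp : g p = 0 := by rw [hg]; ring
  have hgq : g q = 0 := by rw [hg]; ring
  rcases hgv.lt_or_gt with hneg | hpos
  · exact ⟨-g, by simp [hgp], by simp [hgq], v, hv, by simpa using hneg⟩
  · exact ⟨g, hgp, hgq, v, hv, hpos⟩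

theorem SimplePolygon.exists_range_eq_of_periodic {k : ℕ} (hk : 3 ≤ k) {w : ℕ → Pt}
    (hper : Function.Periodic w k) (hinj : Set.InjOn w (Set.Iio k))
    (hinter : ∀ a b, a < b → b < k → (Seg (w a) (w (a + 1)) ∩ Seg (w b) (w (b + 1))).Nonempty →
      b = a + 1 ∨ a = 0 ∧ b + 1 = k)
    (hconsec : ∀ a < k, Seg (w a) (w (a + 1)) ∩ Seg (w (a + 1)) (w (a + 2)) = {w (a + 1)}) :
    ∃ P : SimplePolygon, Set.range P.vtx = w '' Set.Iio k := by
  have : NeZero k := ⟨by omega⟩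
  have hadd : ∀ (i : ZMod k) (n : ℕ), w (i + n).val = w (i.val + n) := fun i n => by
    rw [ZMod.val_add, ZMod.val_natCast, Nat.add_mod_mod, hper.map_mod_nat]
  have hadd_one : ∀ i : ZMod k, w (i + 1).val = w (i.val + 1) := by
    simpa using fun i => hadd i 1
  have hadd_two : ∀ i : ZMod k, w (i + 2).val = w (i.val + 2) := fun i => by
    exact_mod_cast hadd i 2
  have hsucc : ∀ i j : ZMod k, i.val < j.val →
      (Seg (w i.val) (w (i.val + 1)) ∩ Seg (w j.val) (w (j.val + 1))).Nonempty →
      j = i + 1 ∨ i = j + 1 := by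
    intro i j hij hmeet
    rcases hinter _ _ hij j.val_lt hmeet with h | ⟨h0, h1⟩
    · left
      rw [← ZMod.natCast_zmod_val j, h, Nat.cast_succ, ZMod.natCast_zmod_val]
    · right
      rw [← ZMod.natCast_zmod_val i, h0, ← ZMod.natCast_zmod_val j, ← Nat.cast_add_one, h1,
        ZMod.natCast_self, Nat.cast_zero]
  refine ⟨⟨k, hk, fun i => w i.val, fun i j hij => ZMod.val_injective k
    (hinj i.val_lt j.val_lt hij), fun i j hij => ⟨fun hmeet => ?_, ?_⟩, fun i => ?_⟩, ?_⟩
  · rw [hadd_one, hadd_one] at hmeet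
    rcases ((ZMod.val_injective k).ne hij).lt_or_gt with h | h
    · exact hsucc i j h hmeet
    · exact (hsucc j i h (Set.inter_comm _ _ ▸ hmeet)).symm
  · rintro (rfl | rfl)
    · exact ⟨_, right_mem_segment ℝ _ _, left_mem_segment ℝ _ _⟩
    · exact ⟨_, left_mem_segment ℝ _ _, right_mem_segment ℝ _ _⟩
  · simp only [hadd_one, hadd_two]
    exact hconsec _ i.val_lt
  · have hval : Set.range (ZMod.val : ZMod k → ℕ) = Set.Iio k :=
      Set.ext fun n => ⟨fun ⟨i, hi⟩ => hi ▸ i.val_lt, fun hn => ⟨n, ZMod.val_cast_of_lt hn⟩⟩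
    rw [← hval, ← Set.range_comp]
    rfl

/-- `w` is the `k`-periodic vertex sequence of a polygon made of a lower chain `w 0, …, w t`,
increasing in `f` and in the half-plane `g ≤ 0`, and an upper chain `w t, …, w k = w 0`,
decreasing in `f`, whose inner vertices lie in `g > 0`. -/
structure IsMonotoneCycle (f g : Pt →ᵃ[ℝ] ℝ) (k t : ℕ) (w : ℕ → Pt) : Prop where
  one_le_turn : 1 ≤ t
  turn_add_two_le : t + 2 ≤ k
  periodic : Function.Periodic w k
  strictMonoOn_lower : StrictMonoOn (f ∘ w) (Set.Icc 0 t)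
  strictAntiOn_upper : StrictAntiOn (f ∘ w) (Set.Icc t k)
  lower_nonpos : ∀ i ≤ t, g (w i) ≤ 0
  upper_pos : ∀ i, t < i → i < k → 0 < g (w i)
  start_eq_zero : g (w 0) = 0
  turn_eq_zero : g (w t) = 0

namespace IsMonotoneCycle

variable {f g : Pt →ᵃ[ℝ] ℝ} {k t : ℕ} {w : ℕ → Pt}

lemma apply_period (hw : IsMonotoneCycle f g k t w) : w k = w 0 := by
  simpa using hw.periodic 0

lemma lower_lt (hw : IsMonotoneCycle f g k t w) {i j : ℕ} (hij : i < j) (hj : j ≤ t) :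
    f (w i) < f (w j) :=
  hw.strictMonoOn_lower ⟨i.zero_le, by omega⟩ ⟨j.zero_le, hj⟩ hij

lemma upper_lt (hw : IsMonotoneCycle f g k t w) {i j : ℕ} (hi : t ≤ i) (hij : i < j)
    (hj : j ≤ k) : f (w j) < f (w i) :=
  hw.strictAntiOn_upper ⟨hi, by omega⟩ ⟨by omega, hj⟩ hij

lemma injOn (hw : IsMonotoneCycle f g k t w) : Set.InjOn w (Set.Iio k) := by
  intro a ha b hb hab
  by_contra hne
  wlog hlt : a < b generalizing a b
  · exact this hb ha hab.symm (Ne.symm hne) (by omega)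
  rcases le_or_gt b t with hbt | htb
  · exact (hw.lower_lt hlt hbt).ne (congrArg f hab)
  rcases le_or_gt a t with hat | hta
  · exact (hw.lower_nonpos a hat).not_gt (hab ▸ hw.upper_pos b htb hb)
  · exact (hw.upper_lt hta.le hlt hb.le).ne' (congrArg f hab)

lemma eq_succ_or_of_seg_inter_nonempty (hw : IsMonotoneCycle f g k t w) {a b : ℕ} (hab : a < b)
    (hbk : b < k) (hz : (Seg (w a) (w (a + 1)) ∩ Seg (w b) (w (b + 1))).Nonempty) :
    b = a + 1 ∨ a = 0 ∧ b + 1 = k := by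
  obtain ⟨z, hza, hzb⟩ := hz
  by_contra! hne
  have hab' : a + 1 < b := by omega
  rcases lt_or_ge b t with hbt | htb
  · exact (disjoint_segment_of_apply_le_of_lt f (hw.lower_lt a.lt_add_one (by omega)).le
      le_rfl (hw.lower_lt hab' (by omega)) (hw.lower_lt (by omega) (by omega))).ne_of_mem
      hza hzb rfl
  rcases lt_or_ge a t with hat | hta
  swap
  · exact (disjoint_segment_of_apply_le_of_lt f le_rfl
      (hw.upper_lt (by omega) b.lt_add_one (by omega)).le (hw.upper_lt hta hab hbk.le)
      (hw.upper_lt (by omega) hab' hbk.le)).ne_of_mem hzb hza rfl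
  have hga := hw.lower_nonpos a hat.le
  have hga' := hw.lower_nonpos (a + 1) hat
  rcases htb.eq_or_lt with rfl | htb
  · have htk := hw.turn_add_two_le
    have hgt := hw.turn_eq_zero
    have hz : z = w t := eq_of_mem_segment_of_mem_segment g (hgt ▸ hga) (hgt ▸ hga')
      (hgt ▸ hw.upper_pos (t + 1) (by omega) (by omega)) hza hzb
    exact (apply_le_of_mem_segment f (hw.lower_lt a.lt_add_one (by omega)).le le_rfl hza).not_gt
      (hz ▸ hw.lower_lt hab' le_rfl)
  rcases (show b + 1 ≤ k from hbk).lt_or_eq with hbk' | hbk'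
  · exact (disjoint_segment_of_apply_le_of_lt g hga hga' (hw.upper_pos b htb hbk)
      (hw.upper_pos (b + 1) (by omega) hbk')).ne_of_mem hza hzb rfl
  · have hgk : g (w (b + 1)) = 0 := by rw [hbk', hw.apply_period, hw.start_eq_zero]
    have hz : z = w (b + 1) := eq_of_mem_segment_of_mem_segment g (hgk ▸ hga) (hgk ▸ hga')
      (hgk ▸ hw.upper_pos b htb hbk) hza ((segment_symm ℝ _ _).subset hzb)
    rw [hbk', hw.apply_period] at hz
    have ha0 : 0 < a := Nat.pos_of_ne_zero fun ha => hne.2 ha hbk'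
    exact (le_apply_of_mem_segment f le_rfl (hw.lower_lt a.lt_add_one (by omega)).le hza).not_gt
      (hz ▸ hw.lower_lt ha0 hat.le)

lemma seg_inter_seg_succ (hw : IsMonotoneCycle f g k t w) {a : ℕ} (hak : a < k) :
    Seg (w a) (w (a + 1)) ∩ Seg (w (a + 1)) (w (a + 2)) = {w (a + 1)} := by
  refine Set.eq_singleton_iff_unique_mem.2
    ⟨⟨right_mem_segment ℝ _ _, left_mem_segment ℝ _ _⟩, fun z ⟨hz, hz'⟩ => ?_⟩
  have htk := hw.turn_add_two_le
  rcases lt_trichotomy (a + 1) t with hat | hat | hta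
  · exact eq_of_mem_segment_of_mem_segment f (hw.lower_lt a.lt_add_one hat.le).le le_rfl
      (hw.lower_lt (a + 1).lt_add_one hat) hz hz'
  · have hgt := hw.turn_eq_zero
    rw [← hat] at hgt
    exact eq_of_mem_segment_of_mem_segment g (hgt ▸ hw.lower_nonpos a (by omega)) le_rfl
      (hgt ▸ hw.upper_pos (a + 2) (by omega) (by omega)) hz hz'
  rcases (show a + 1 ≤ k from hak).lt_or_eq with hak' | hak'
  · exact eq_of_mem_segment_of_mem_segment f le_rfl
      (hw.upper_lt hta.le (a + 1).lt_add_one hak').le (hw.upper_lt (by omega) a.lt_add_one hak'.le)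
      hz' ((segment_symm ℝ _ _).subset hz)
  · have hgk : g (w (a + 1)) = 0 := by rw [hak', hw.apply_period, hw.start_eq_zero]
    have hw1 : w (a + 2) = w 1 := by rw [show a + 2 = 1 + k by omega, hw.periodic 1]
    rw [hw1] at hz'
    exact eq_of_mem_segment_of_mem_segment g le_rfl (hgk ▸ hw.lower_nonpos 1 hw.one_le_turn)
      (hgk ▸ hw.upper_pos a (by omega) hak) hz' ((segment_symm ℝ _ _).subset hz)

theorem exists_simplePolygon (hw : IsMonotoneCycle f g k t w) :
    ∃ P : SimplePolygon, Set.range P.vtx = w '' Set.Iio k :=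
  SimplePolygon.exists_range_eq_of_periodic (by linarith [hw.one_le_turn, hw.turn_add_two_le])
    hw.periodic hw.injOn (fun _ _ => hw.eq_succ_or_of_seg_inter_nonempty)
    (fun _ => hw.seg_inter_seg_succ)

end IsMonotoneCycle

/-- Sorting by this key lists the points of `g ≤ 0` by increasing `f`, then those of `g > 0` by
decreasing `f`, as long as `f ≤ M` on all of them. -/
def cycleKey (f g : Pt → ℝ) (M : ℝ) (v : Pt) : ℝ := if g v ≤ 0 then f v else 2 * M - f v

section CycleKey

variable {V : Finset Pt} {f g : Pt →ᵃ[ℝ] ℝ} {q : Pt}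

lemma cycleKey_le_iff (hf : Set.InjOn f V) (hq : q ∈ V) (hq_max : ∀ v ∈ V, f v ≤ f q)
    (hgq : g q = 0) {v : Pt} (hv : v ∈ V) : cycleKey f g (f q) v ≤ f q ↔ g v ≤ 0 := by
  by_cases hgv : g v ≤ 0
  · simp [cycleKey, hgv, hq_max v hv]
  · have : f v < f q := (hq_max v hv).lt_of_ne fun h => hgv (hf hv hq h ▸ hgq.le)
    simp only [cycleKey, hgv, if_false, iff_false, not_le]
    linarith

lemma injOn_cycleKey (hf : Set.InjOn f V) (hq : q ∈ V) (hq_max : ∀ v ∈ V, f v ≤ f q)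
    (hgq : g q = 0) : Set.InjOn (cycleKey f g (f q)) V := by
  intro u hu v hv huv
  have hside : g u ≤ 0 ↔ g v ≤ 0 := by
    rw [← cycleKey_le_iff hf hq hq_max hgq hu, ← cycleKey_le_iff hf hq hq_max hgq hv, huv]
  refine hf hu hv ?_
  by_cases hgu : g u ≤ 0
  · simpa [cycleKey, hgu, hside.1 hgu] using huv
  · simp only [cycleKey, hgu, mt hside.2 hgu, if_false] at huv
    linarith

end CycleKey

open Finset in
theorem exists_bitonic_enumeration {V : Finset Pt} {f g : Pt →ᵃ[ℝ] ℝ} {q : Pt}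
    (hf : Set.InjOn f V) (hq : q ∈ V) (hq_max : ∀ v ∈ V, f v ≤ f q) (hgq : g q = 0) :
    ∃ (w : ℕ → Pt) (t : ℕ), Set.BijOn w (Set.Iio #V) V ∧ t < #V ∧ w t = q ∧
      (∀ i < #V, g (w i) ≤ 0 ↔ i ≤ t) ∧
      StrictMonoOn (f ∘ w) (Set.Icc 0 t) ∧ StrictAntiOn (f ∘ w) (Set.Ico t #V) := by
  obtain ⟨w, hbij, hmono⟩ :=
    V.exists_bijOn_strictMonoOn_comp (injOn_cycleKey hf hq hq_max hgq)
  obtain ⟨t, htk : t < #V, hqt⟩ := hbij.surjOn hq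
  have hkey_q : cycleKey f g (f q) q = f q := by simp [cycleKey, hgq]
  have hside : ∀ i < #V, g (w i) ≤ 0 ↔ i ≤ t := fun i hi => by
    have := hmono.le_iff_le hi htk
    rwa [Function.comp_apply, Function.comp_apply, hqt, hkey_q,
      cycleKey_le_iff hf hq hq_max hgq (hbij.mapsTo hi)] at this
  refine ⟨w, t, hbij, htk, hqt, hside, fun i ⟨_, hit⟩ j ⟨_, hjt⟩ hij => ?_,
    fun i ⟨hti, hik⟩ j ⟨htj, hjk⟩ hij => ?_⟩
  · have := hmono (by omega : i < #V) (by omega : j < #V) hij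
    simpa [cycleKey, (hside i (by omega)).2 hit, (hside j (by omega)).2 hjt] using this
  · have hkey : ∀ i, t ≤ i → i < #V → cycleKey f g (f q) (w i) = 2 * f q - f (w i) := by
      intro i hti hik
      rcases hti.eq_or_lt with rfl | hti
      · rw [hqt, hkey_q]; ring
      · exact if_neg (mt (hside i hik).1 hti.not_ge)
    have := hmono hik hjk hij
    simp only [Function.comp_apply, hkey i hti hik, hkey j htj hjk] at this ⊢
    linarith

open Finset in
theorem exists_isMonotoneCycle {V : Finset Pt} {f g : Pt →ᵃ[ℝ] ℝ} {p q : Pt}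
    (hf : Set.InjOn f V) (hp : p ∈ V) (hq : q ∈ V) (hp_min : ∀ v ∈ V, f p ≤ f v)
    (hq_max : ∀ v ∈ V, f v ≤ f q) (hgp : g p = 0) (hgq : g q = 0) (hg : ∃ v ∈ V, 0 < g v) :
    ∃ k t w, IsMonotoneCycle f g k t w ∧ w '' Set.Iio k = V := by
  obtain ⟨w, t, hbij, htk, hqt, hside, hlower, hupper⟩ :=
    exists_bitonic_enumeration hf hq hq_max hgq
  obtain ⟨v, hv, hgv⟩ := hg
  obtain ⟨i, hik : i < #V, rfl⟩ := hbij.surjOn hv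
  have hti : t < i := not_le.1 fun hit => hgv.not_ge ((hside i hik).2 hit)
  obtain ⟨j, hjk : j < #V, rfl⟩ := hbij.surjOn hp
  obtain rfl : j = 0 := by
    by_contra hj
    exact (hp_min _ (hbij.mapsTo (by omega : 0 < #V))).not_gt
      (hlower ⟨le_rfl, by omega⟩ ⟨by omega, (hside j hjk).1 hgp.le⟩ (by omega))
  have ht : 1 ≤ t := Nat.one_le_iff_ne_zero.2 fun ht => by
    subst ht
    have hvi := hbij.mapsTo hik
    have hfi : f (w i) = f (w 0) := (hqt ▸ hq_max _ hvi).antisymm (hp_min _ hvi)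
    exact hgv.ne' (hf hvi hp hfi ▸ hgp)
  have hwk : ∀ n < #V, w (n % #V) = w n := fun n hn => by rw [Nat.mod_eq_of_lt hn]
  refine ⟨#V, t, fun n => w (n % #V),
    ⟨ht, by omega, fun n => by simp, ?_, ?_, ?_, ?_, ?_, ?_⟩,
    (Set.image_congr fun n hn => hwk n hn).trans hbij.image_eq⟩
  · intro a ⟨_, hat⟩ b ⟨_, hbt⟩ hab
    simpa [Function.comp_apply, hwk a (by omega), hwk b (by omega)] using
      hlower ⟨a.zero_le, hat⟩ ⟨b.zero_le, hbt⟩ hab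
  · intro a ⟨hta, hak⟩ b ⟨htb, hbk⟩ hab
    simp only [Function.comp_apply, hwk a (by omega)]
    rcases hbk.lt_or_eq with hbk | rfl
    · rw [hwk b hbk]
      exact hupper ⟨hta, by omega⟩ ⟨htb, hbk⟩ hab
    · rw [Nat.mod_self]
      refine (hp_min _ (hbij.mapsTo (by omega : a < #V))).lt_of_ne fun h => ?_
      have := hbij.injOn (by omega : 0 < #V) (by omega : a < #V)
        (hf hp (hbij.mapsTo (by omega : a < #V)) h)
      omega
  · exact fun a ha => by rw [hwk a (by omega)]; exact (hside a (by omega)).2 ha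
  · exact fun a hta hak => by rw [hwk a hak]; exact not_le.1 (mt (hside a hak).1 hta.not_ge)
  · simpa using hgp
  · simpa [hwk t htk, hqt] using hgq

theorem exists_simple_polygonization_general (V : Finset Pt)
    (hnc : ¬ Collinear ℝ (V : Set Pt)) :
    ∃ P : SimplePolygon, Set.range P.vtx = (V : Set Pt) := by
  obtain ⟨u, hu, v, hv, huv⟩ := Set.nontrivial_of_not_collinear hnc
  obtain ⟨f, hf⟩ := exists_affineMap_injOn V
  obtain ⟨p, hp, hp_min⟩ := V.exists_min_image f ⟨u, hu⟩
  obtain ⟨q, hq, hq_max⟩ := V.exists_max_image f ⟨u, hu⟩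
  have hpq : p ≠ q := by
    rintro rfl
    exact huv (hf hu hv (by linarith [hp_min u hu, hq_max u hu, hp_min v hv, hq_max v hv]))
  obtain ⟨g, hgp, hgq, hg⟩ := exists_affineMap_eq_zero_of_not_collinear hnc hpq
  obtain ⟨k, t, w, hw, hV⟩ := exists_isMonotoneCycle hf hp hq hp_min hq_max hgp hgq hg
  obtain ⟨P, hP⟩ := hw.exists_simplePolygon
  exact ⟨P, hP.trans hV⟩

/-- Every finite set of at least 3 points in the plane, not all collinear,
is the vertex set of a simple polygon. -/
theorem exists_simple_polygonization (V : Finset Pt) (hV : 3 ≤ V.card)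
    (hnc : ¬ Collinear ℝ (V : Set Pt)) :
    ∃ P : SimplePolygon, Set.range P.vtx = (V : Set Pt) :=
  exists_simple_polygonization_general V hnc
end
end
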